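/- arXiv:2504.00803 — 12 statements merged into one kernel-verified Lean document; each statement's English description precedes it below -/
import Mathlib

section
/- Let p ≥ 3 be an odd natural number, μ ≥ 0 and α > 0. Then for any initial data (x₀, x₁) ∈ ℝ², there exists a global solution x ∈ C²([0, ∞)) of the initial value problem x''(t) + μ x'(t) + α x(t)^p = 0 for t > 0, with x(0) = x₀ and x'(0) = x₁. -/
open Set

private lemma duffing_clamp_lip (M a b : ℝ) :
    |max (-M) (min a M) - max (-M) (min b M)| ≤ |a - b| := by
  rw [max_comm (-M) (min a M), max_comm (-M) (min b M)]
  refine (abs_max_sub_max_le_abs _ _ _).trans ?_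
  have h := abs_min_sub_min_le_max a M b M
  simpa [sub_self, max_eq_left (abs_nonneg (a - b))] using h

private lemma duffing_pow_lip (p : ℕ) (M : ℝ) {a b : ℝ} (ha : |a| ≤ M) (hb : |b| ≤ M) :
    |a ^ p - b ^ p| ≤ (p * M ^ (p - 1)) * |a - b| := by
  have h := (convex_Icc (-M) M).norm_image_sub_le_of_norm_deriv_le
    (f := fun x : ℝ => x ^ p) (C := p * M ^ (p - 1))
    (fun x _ => (differentiable_pow p).differentiableAt)
    (fun x hx => by
      rw [deriv_pow_field, Real.norm_eq_abs, abs_mul, abs_pow, Nat.abs_cast]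
      have h1 : |x| ≤ M := abs_le.2 ⟨hx.1, hx.2⟩
      have h2 : |x| ^ (p - 1) ≤ M ^ (p - 1) := pow_le_pow_left₀ (abs_nonneg x) h1 _
      exact mul_le_mul_of_nonneg_left h2 (Nat.cast_nonneg p))
    (abs_le.1 ha) (abs_le.1 hb)
  rw [Real.norm_eq_abs, Real.norm_eq_abs] at h
  have h' : |b ^ p - a ^ p| ≤ (p * M ^ (p - 1)) * |b - a| := by simpa using h
  calc |a ^ p - b ^ p| = |b ^ p - a ^ p| := abs_sub_comm _ _
    _ ≤ (p * M ^ (p - 1)) * |b - a| := h'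
    _ = (p * M ^ (p - 1)) * |a - b| := by rw [abs_sub_comm]

/-- Global existence of a C² solution to the Duffing-type
equation `x'' + μ x' + α x^p = 0` on `[0, ∞)` with initial data `(x₀, x₁)`. -/
theorem duffing_global_existence
    (p : ℕ) (hp : 3 ≤ p) (hodd : Odd p)
    (μ α : ℝ) (hμ : 0 ≤ μ) (hα : 0 < α) (x₀ x₁ : ℝ) :
    ∃ x x' : ℝ → ℝ,
      (∀ t ∈ Ici (0:ℝ), HasDerivWithinAt x (x' t) (Ici 0) t) ∧
      (∀ t ∈ Ici (0:ℝ),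
        HasDerivWithinAt x' (-(μ * x' t) - α * x t ^ p) (Ici 0) t) ∧
      x 0 = x₀ ∧ x' 0 = x₁ := by
  classical
  obtain ⟨P1, hP1⟩ : ∃ y : ℝ, y = (p : ℝ) + 1 := ⟨_, rfl⟩
  have hP1pos : 0 < P1 := by rw [hP1]; positivity
  have hevenp1 : Even (p + 1) := hodd.add_one
  obtain ⟨E₀, hE₀def⟩ : ∃ y : ℝ, y = x₁ ^ 2 / 2 + α * x₀ ^ (p + 1) / P1 := ⟨_, rfl⟩
  have hx0pow : (0:ℝ) ≤ x₀ ^ (p + 1) := hevenp1.pow_nonneg x₀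
  have hE₀ : 0 ≤ E₀ := by
    have h1 : 0 ≤ α * x₀ ^ (p + 1) / P1 := div_nonneg (mul_nonneg hα.le hx0pow) hP1pos.le
    have h2 : 0 ≤ x₁ ^ 2 / 2 := by positivity
    rw [hE₀def]; linarith
  obtain ⟨c, hc⟩ : ∃ y : ℝ, y = P1 * E₀ / α := ⟨_, rfl⟩
  have hc0 : 0 ≤ c := by
    rw [hc]; exact div_nonneg (mul_nonneg hP1pos.le hE₀) hα.le
  obtain ⟨r₁, hr₁def⟩ : ∃ y : ℝ, y = Real.sqrt (2 * E₀) := ⟨_, rfl⟩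
  obtain ⟨r₂, hr₂def⟩ : ∃ y : ℝ, y = c ^ (((p + 1 : ℕ) : ℝ))⁻¹ := ⟨_, rfl⟩
  have hr₂pow : r₂ ^ (p + 1) = c := by
    rw [hr₂def]; exact Real.rpow_inv_natCast_pow hc0 (Nat.succ_ne_zero p)
  have hr₁0 : 0 ≤ r₁ := by rw [hr₁def]; exact Real.sqrt_nonneg _
  have hr₂0 : 0 ≤ r₂ := by rw [hr₂def]; exact Real.rpow_nonneg hc0 _
  obtain ⟨r, hrdef⟩ : ∃ y : ℝ, y = max r₁ r₂ := ⟨_, rfl⟩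
  have hr0 : 0 ≤ r := by rw [hrdef]; exact le_trans hr₁0 (le_max_left _ _)
  obtain ⟨B, hBdef⟩ : ∃ y : ℝ, y = r + 1 := ⟨_, rfl⟩
  obtain ⟨M, hMdef⟩ : ∃ y : ℝ, y = B + 1 := ⟨_, rfl⟩
  have hB0 : 0 < B := by rw [hBdef]; linarith
  have hM0 : 0 < M := by rw [hMdef]; linarith
  have hBM : B ≤ M := by rw [hMdef]; linarith
  -- energy bound
  have energy_bound : ∀ a b : ℝ, b ^ 2 / 2 + α * a ^ (p + 1) / P1 ≤ E₀ →
      |a| ≤ r ∧ |b| ≤ r := by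
    intro a b h
    have hapow : 0 ≤ a ^ (p + 1) := hevenp1.pow_nonneg a
    have h1 : 0 ≤ α * a ^ (p + 1) / P1 := div_nonneg (mul_nonneg hα.le hapow) hP1pos.le
    have h2 : 0 ≤ b ^ 2 / 2 := by positivity
    constructor
    · have h3 : α * a ^ (p + 1) / P1 ≤ E₀ := by linarith
      have h4 : a ^ (p + 1) ≤ c := by
        rw [hc, le_div_iff₀ hα]
        rw [div_le_iff₀ hP1pos] at h3
        linarith [h3]
      have h5 : |a| ^ (p + 1) ≤ r₂ ^ (p + 1) := by
        rw [hevenp1.pow_abs, hr₂pow]; exact h4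
      refine (le_of_pow_le_pow_left₀ (Nat.succ_ne_zero p) hr₂0 h5).trans ?_
      rw [hrdef]; exact le_max_right _ _
    · have h3 : b ^ 2 ≤ 2 * E₀ := by linarith
      have hb' : |b| = Real.sqrt (b ^ 2) := (Real.sqrt_sq_eq_abs b).symm
      rw [hb', hrdef, hr₁def]
      exact (Real.sqrt_le_sqrt h3).trans (le_max_left _ _)
  have hinit : |x₀| ≤ r ∧ |x₁| ≤ r := energy_bound x₀ x₁ (le_of_eq hE₀def.symm)
  -- clamp
  obtain ⟨clamp, hclampdef⟩ : ∃ f : ℝ → ℝ, f = fun a => max (-M) (min a M) := ⟨_, rfl⟩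
  have hclamp_eq : ∀ a : ℝ, |a| ≤ M → clamp a = a := by
    intro a ha
    rcases abs_le.1 ha with ⟨h1, h2⟩
    rw [hclampdef]
    simp only
    rw [min_eq_left h2, max_eq_right h1]
  have hclamp_abs : ∀ a : ℝ, |clamp a| ≤ M := by
    intro a
    rw [hclampdef, abs_le]
    refine ⟨le_max_left _ _, max_le (by linarith) (min_le_right _ _)⟩
  have hclamp_lip : ∀ a b : ℝ, |clamp a - clamp b| ≤ |a - b| := by
    intro a b
    rw [hclampdef]
    exact duffing_clamp_lip M a b
  -- truncated vector field
  obtain ⟨g, hgdef⟩ : ∃ f : ℝ × ℝ → ℝ × ℝ,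
      f = fun z => (clamp z.2, -(μ * clamp z.2) - α * clamp z.1 ^ p) := ⟨_, rfl⟩
  have hg1' : ∀ z : ℝ × ℝ, (g z).1 = clamp z.2 := by intro z; rw [hgdef]
  have hg2' : ∀ z : ℝ × ℝ, (g z).2 = -(μ * clamp z.2) - α * clamp z.1 ^ p := by
    intro z; rw [hgdef]
  obtain ⟨K₀, hK₀def⟩ : ∃ y : ℝ, y = 1 + μ + α * (p * M ^ (p - 1)) := ⟨_, rfl⟩
  have hpM : (0:ℝ) ≤ p * M ^ (p - 1) := by positivity
  have hK₀0 : 0 ≤ K₀ := by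
    have h1 : 0 ≤ α * (p * M ^ (p - 1)) := mul_nonneg hα.le hpM
    rw [hK₀def]; linarith
  have hgLipR : ∀ z w : ℝ × ℝ, dist (g z) (g w) ≤ K₀ * dist z w := by
    intro z w
    have hd1 : |z.1 - w.1| ≤ dist z w := by
      rw [Prod.dist_eq, ← Real.dist_eq]; exact le_max_left _ _
    have hd2 : |z.2 - w.2| ≤ dist z w := by
      rw [Prod.dist_eq, ← Real.dist_eq]; exact le_max_right _ _
    have hD0 : (0:ℝ) ≤ dist z w := dist_nonneg
    rw [Prod.dist_eq]
    apply max_le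
    · rw [Real.dist_eq, hg1' z, hg1' w]
      have h := (hclamp_lip z.2 w.2).trans hd2
      have hK1 : 1 ≤ K₀ := by
        have h9 : 0 ≤ α * (p * M ^ (p - 1)) := mul_nonneg hα.le hpM
        rw [hK₀def]; linarith
      exact h.trans (le_mul_of_one_le_left hD0 hK1)
    · rw [Real.dist_eq, hg2' z, hg2' w]
      have hpw : |clamp z.1 ^ p - clamp w.1 ^ p| ≤ p * M ^ (p - 1) * dist z w :=
        (duffing_pow_lip p M (hclamp_abs z.1) (hclamp_abs w.1)).trans
          (mul_le_mul_of_nonneg_left ((hclamp_lip z.1 w.1).trans hd1) hpM)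
      have hcl2 : |clamp z.2 - clamp w.2| ≤ dist z w := (hclamp_lip z.2 w.2).trans hd2
      have hkey : (-(μ * clamp z.2) - α * clamp z.1 ^ p) -
          (-(μ * clamp w.2) - α * clamp w.1 ^ p)
          = -(μ * (clamp z.2 - clamp w.2)) - α * (clamp z.1 ^ p - clamp w.1 ^ p) := by ring
      rw [hkey]
      have habs : |-(μ * (clamp z.2 - clamp w.2)) - α * (clamp z.1 ^ p - clamp w.1 ^ p)|
          ≤ μ * |clamp z.2 - clamp w.2| + α * |clamp z.1 ^ p - clamp w.1 ^ p| := by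
        calc |-(μ * (clamp z.2 - clamp w.2)) - α * (clamp z.1 ^ p - clamp w.1 ^ p)|
            ≤ |μ * (clamp z.2 - clamp w.2)| + |α * (clamp z.1 ^ p - clamp w.1 ^ p)| := by
              rw [sub_eq_add_neg]
              refine (abs_add_le _ _).trans ?_
              rw [abs_neg, abs_neg]
          _ = μ * |clamp z.2 - clamp w.2| + α * |clamp z.1 ^ p - clamp w.1 ^ p| := by
              rw [abs_mul, abs_mul, abs_of_nonneg hμ, abs_of_nonneg hα.le]
      have h2' : μ * |clamp z.2 - clamp w.2| ≤ μ * dist z w :=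
        mul_le_mul_of_nonneg_left hcl2 hμ
      have h1' : α * |clamp z.1 ^ p - clamp w.1 ^ p| ≤ α * (p * M ^ (p - 1) * dist z w) :=
        mul_le_mul_of_nonneg_left hpw hα.le
      have hfin : μ * dist z w + α * (p * M ^ (p - 1) * dist z w)
          ≤ (1 + μ + α * (p * M ^ (p - 1))) * dist z w := by nlinarith [hD0]
      rw [hK₀def]
      linarith
  have hgLip : LipschitzWith K₀.toNNReal g := by
    apply LipschitzWith.of_dist_le_mul
    intro z w
    rw [Real.coe_toNNReal _ hK₀0]
    exact hgLipR z w
  -- global bound on g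
  obtain ⟨C₀, hC₀def⟩ : ∃ y : ℝ, y = M + (μ * M + α * M ^ p) := ⟨_, rfl⟩
  have hC₀0 : 0 < C₀ := by
    have h1 : 0 ≤ μ * M := mul_nonneg hμ hM0.le
    have h2 : 0 ≤ α * M ^ p := by positivity
    rw [hC₀def]; linarith
  have hgBound : ∀ z : ℝ × ℝ, ‖g z‖ ≤ C₀ := by
    intro z
    rw [Prod.norm_def]
    simp only [Real.norm_eq_abs]
    have h1 := hclamp_abs z.1
    have h2 := hclamp_abs z.2
    have hpow : |clamp z.1| ^ p ≤ M ^ p := pow_le_pow_left₀ (abs_nonneg _) h1 p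
    have ha : 0 ≤ μ * M := mul_nonneg hμ hM0.le
    have hb : 0 ≤ α * M ^ p := by positivity
    apply max_le
    · rw [hg1' z, hC₀def]; linarith
    · rw [hg2' z]
      have habs : |(-(μ * clamp z.2) - α * clamp z.1 ^ p)|
          ≤ μ * |clamp z.2| + α * |clamp z.1| ^ p := by
        calc |(-(μ * clamp z.2) - α * clamp z.1 ^ p)|
            ≤ |μ * clamp z.2| + |α * clamp z.1 ^ p| := by
              rw [sub_eq_add_neg]
              refine (abs_add_le _ _).trans ?_
              rw [abs_neg, abs_neg]
          _ = μ * |clamp z.2| + α * |clamp z.1| ^ p := by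
              rw [abs_mul, abs_mul, abs_pow, abs_of_nonneg hμ, abs_of_nonneg hα.le]
      have h3 : μ * |clamp z.2| ≤ μ * M := mul_le_mul_of_nonneg_left h2 hμ
      have h4 : α * |clamp z.1| ^ p ≤ α * M ^ p := mul_le_mul_of_nonneg_left hpow hα.le
      rw [hC₀def]
      linarith
  -- local solutions via Picard–Lindelöf
  have hsolx : ∀ n : ℕ, ∃ f : ℝ → ℝ × ℝ, f 0 = (x₀, x₁) ∧
      ∀ t ∈ Icc (0:ℝ) ((n:ℝ) + 1), HasDerivWithinAt f (g (f t)) (Icc 0 ((n:ℝ) + 1)) t := by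
    intro n
    have hn1 : (0:ℝ) ≤ (n:ℝ) + 1 := by positivity
    have hpl : IsPicardLindelof (fun _ z => g z) (tmin := 0) (tmax := (n:ℝ) + 1)
        ⟨0, le_rfl, hn1⟩ (x₀, x₁) (C₀ * ((n:ℝ) + 1)).toNNReal 0 C₀.toNNReal K₀.toNNReal :=
      IsPicardLindelof.of_time_independent
        (fun x _ => by rw [Real.coe_toNNReal _ hC₀0.le]; exact hgBound x)
        hgLip.lipschitzOnWith
        (by
          rw [Real.coe_toNNReal _ hC₀0.le, Real.coe_toNNReal _ (by positivity)]
          simp [max_eq_left hn1])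
    exact hpl.exists_eq_forall_mem_Icc_hasDerivWithinAt₀
  choose sol hsol0 hsolD using hsolx
  -- derivative within Ici s for interior times
  have hsolIci : ∀ (n : ℕ) (s : ℝ), 0 ≤ s → s < (n:ℝ) + 1 →
      HasDerivWithinAt (sol n) (g (sol n s)) (Ici s) s := by
    intro n s hs0 hsn
    have h := hsolD n s ⟨hs0, hsn.le⟩
    have h2 : HasDerivWithinAt (sol n) (g (sol n s)) (Ici s ∩ Iio ((n:ℝ) + 1)) s :=
      h.mono (fun x hx => ⟨hs0.trans hx.1, hx.2.le⟩)
    exact h2.mono_of_mem_nhdsWithin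
      (Filter.inter_mem self_mem_nhdsWithin (mem_nhdsWithin_of_mem_nhds (Iio_mem_nhds hsn)))
  have hsolCont : ∀ n : ℕ, ContinuousOn (sol n) (Icc 0 ((n:ℝ) + 1)) :=
    fun n s hs => (hsolD n s hs).continuousWithinAt
  -- agreement of the local solutions
  have hagree : ∀ (m n : ℕ) (t : ℝ), 0 ≤ t → t ≤ (m:ℝ) + 1 → t ≤ (n:ℝ) + 1 →
      sol m t = sol n t := by
    intro m n t ht0 htm htn
    have hbm : min ((m:ℝ) + 1) ((n:ℝ) + 1) ≤ (m:ℝ) + 1 := min_le_left _ _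
    have hbn : min ((m:ℝ) + 1) ((n:ℝ) + 1) ≤ (n:ℝ) + 1 := min_le_right _ _
    have h := ODE_solution_unique (v := fun _ z => g z) (K := K₀.toNNReal)
      (fun _ => hgLip)
      ((hsolCont m).mono (Icc_subset_Icc_right hbm))
      (fun s hs => hsolIci m s hs.1 (lt_of_lt_of_le hs.2 hbm))
      ((hsolCont n).mono (Icc_subset_Icc_right hbn))
      (fun s hs => hsolIci n s hs.1 (lt_of_lt_of_le hs.2 hbn))
      (by rw [hsol0 m, hsol0 n])
    exact h ⟨ht0, le_min htm htn⟩
  -- glued global solution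
  obtain ⟨F, hFdef⟩ : ∃ f : ℝ → ℝ × ℝ, f = fun t => sol ⌊t⌋₊ t := ⟨_, rfl⟩
  have hFeq : ∀ t : ℝ, F t = sol ⌊t⌋₊ t := by intro t; rw [hFdef]
  have hF0 : F 0 = (x₀, x₁) := by
    rw [hFeq 0]
    norm_num
    exact hsol0 0
  have hFderiv : ∀ t ∈ Ici (0:ℝ), HasDerivWithinAt F (g (F t)) (Ici 0) t := by
    intro t ht
    have htn : t < (⌊t⌋₊ : ℝ) + 1 := Nat.lt_floor_add_one t
    have h1 : HasDerivWithinAt (sol ⌊t⌋₊) (g (sol ⌊t⌋₊ t)) (Icc 0 ((⌊t⌋₊:ℝ) + 1)) t :=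
      hsolD ⌊t⌋₊ t ⟨ht, htn.le⟩
    have h2 : HasDerivWithinAt (sol ⌊t⌋₊) (g (sol ⌊t⌋₊ t)) (Ici 0 ∩ Iio ((⌊t⌋₊:ℝ) + 1)) t :=
      h1.mono (fun x hx => ⟨hx.1, hx.2.le⟩)
    have hmem : Ici (0:ℝ) ∩ Iio ((⌊t⌋₊:ℝ) + 1) ∈ nhdsWithin t (Ici 0) :=
      Filter.inter_mem self_mem_nhdsWithin (mem_nhdsWithin_of_mem_nhds (Iio_mem_nhds htn))
    have h3 : HasDerivWithinAt (sol ⌊t⌋₊) (g (sol ⌊t⌋₊ t)) (Ici 0) t :=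
      h2.mono_of_mem_nhdsWithin hmem
    have heq : F =ᶠ[nhdsWithin t (Ici 0)] sol ⌊t⌋₊ := by
      filter_upwards [hmem] with s hs
      rw [hFeq s]
      exact hagree ⌊s⌋₊ ⌊t⌋₊ s hs.1 (Nat.lt_floor_add_one s).le hs.2.le
    rw [hFeq t]
    exact h3.congr_of_eventuallyEq heq (hFeq t)
  have hFc : ContinuousOn F (Ici 0) := fun t ht => (hFderiv t ht).continuousWithinAt
  -- a priori bound via energy
  have hFbound : ∀ t : ℝ, 0 ≤ t → max |(F t).1| |(F t).2| ≤ B := by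
    by_contra hcon
    push_neg at hcon
    obtain ⟨t₂, ht₂0, ht₂⟩ := hcon
    set A : Set ℝ := {s | 0 ≤ s ∧ B < max |(F s).1| |(F s).2|} with hAdef
    have hAne : A.Nonempty := ⟨t₂, ht₂0, ht₂⟩
    have hAbdd : BddBelow A := ⟨0, fun s hs => hs.1⟩
    obtain ⟨T, hTdef⟩ : ∃ y : ℝ, y = sInf A := ⟨_, rfl⟩
    have hT0 : 0 ≤ T := by rw [hTdef]; exact le_csInf hAne (fun s hs => hs.1)
    have hlow : ∀ s, 0 ≤ s → s < T → max |(F s).1| |(F s).2| ≤ B := by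
      intro s hs0 hsT
      by_contra hbad
      push_neg at hbad
      have : T ≤ s := by rw [hTdef]; exact csInf_le hAbdd ⟨hs0, hbad⟩
      exact absurd this (not_le.2 hsT)
    have hTB : max |(F T).1| |(F T).2| ≤ B := by
      rcases eq_or_lt_of_le hT0 with h0 | h0
      · rw [← h0, hF0]
        rw [hBdef]
        exact max_le (by linarith [hinit.1]) (by linarith [hinit.2])
      · have hc1 : ContinuousWithinAt (fun s => max |(F s).1| |(F s).2|) (Ico 0 T) T := by
          have hbase : ContinuousWithinAt F (Ico 0 T) T :=
            (hFc T hT0).mono (fun s hs => hs.1)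
          exact (hbase.fst.abs).max (hbase.snd.abs)
        have hTcl : T ∈ closure (Ico 0 T) := by
          rw [closure_Ico (ne_of_lt h0)]
          exact ⟨hT0, le_rfl⟩
        haveI hne : (nhdsWithin T (Ico 0 T)).NeBot :=
          mem_closure_iff_nhdsWithin_neBot.1 hTcl
        refine le_of_tendsto hc1 ?_
        filter_upwards [self_mem_nhdsWithin] with s hs
        exact hlow s hs.1 hs.2
    have hgoodIcc : ∀ s ∈ Icc (0:ℝ) T, |(F s).1| ≤ B ∧ |(F s).2| ≤ B := by
      intro s hs
      rcases lt_or_eq_of_le hs.2 with h | h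
      · have := hlow s hs.1 h
        exact ⟨(le_max_left _ _).trans this, (le_max_right _ _).trans this⟩
      · rw [h]
        exact ⟨(le_max_left _ _).trans hTB, (le_max_right _ _).trans hTB⟩
    obtain ⟨Efun, hEfdef⟩ : ∃ f : ℝ → ℝ,
        f = fun s => (F s).2 ^ 2 / 2 + α * (F s).1 ^ (p + 1) / P1 := ⟨_, rfl⟩
    have hEfeq : ∀ s : ℝ, Efun s = (F s).2 ^ 2 / 2 + α * (F s).1 ^ (p + 1) / P1 := by
      intro s; rw [hEfdef]
    have hEfun0 : Efun 0 = E₀ := by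
      rw [hEfeq 0, hF0, hE₀def]
    have hderivE : ∀ s ∈ interior (Icc (0:ℝ) T), HasDerivAt Efun (-(μ * (F s).2 ^ 2)) s := by
      rw [interior_Icc]
      intro s hs
      have hs0 : (0:ℝ) < s := hs.1
      have hFs : HasDerivAt F (g (F s)) s :=
        (hFderiv s hs0.le).hasDerivAt (Ici_mem_nhds hs0)
      have hbd := hgoodIcc s ⟨hs0.le, hs.2.le⟩
      have hg1 : clamp (F s).1 = (F s).1 := hclamp_eq _ (hbd.1.trans hBM)
      have hg2 : clamp (F s).2 = (F s).2 := hclamp_eq _ (hbd.2.trans hBM)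
      have hgF : g (F s) = ((F s).2, -(μ * (F s).2) - α * (F s).1 ^ p) := by
        rw [hgdef]
        simp only
        rw [hg1, hg2]
      rw [hgF] at hFs
      have h1 : HasDerivAt (fun u => (F u).1) ((F s).2) s := by
        have := (ContinuousLinearMap.fst ℝ ℝ ℝ).hasFDerivAt.comp_hasDerivAt s hFs
        simpa [Function.comp_def] using this
      have h2 : HasDerivAt (fun u => (F u).2) (-(μ * (F s).2) - α * (F s).1 ^ p) s := by
        have := (ContinuousLinearMap.snd ℝ ℝ ℝ).hasFDerivAt.comp_hasDerivAt s hFs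
        simpa [Function.comp_def] using this
      have e1 : HasDerivAt (fun u => (F u).2 ^ 2 / 2)
          ((2 * (F s).2 ^ 1 * (-(μ * (F s).2) - α * (F s).1 ^ p)) / 2) s :=
        (h2.pow 2).div_const 2
      have e2 : HasDerivAt (fun u => α * (F u).1 ^ (p + 1) / P1)
          ((α * (((p:ℝ) + 1) * (F s).1 ^ p * (F s).2)) / P1) s := by
        have h3 := ((h1.pow (p + 1)).const_mul α).div_const P1
        have hcst : ((p + 1 : ℕ) : ℝ) = (p:ℝ) + 1 := by push_cast; ring
        simpa [Nat.add_sub_cancel, hcst] using h3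
      have hsum := e1.add e2
      rw [hEfdef]
      refine HasDerivAt.congr_deriv hsum ?_
      rw [← hP1] at *
      field_simp [hP1pos.ne']
      ring
    have hanti : AntitoneOn Efun (Icc 0 T) := by
      apply antitoneOn_of_deriv_nonpos (convex_Icc 0 T)
      · have hFcT : ContinuousOn F (Icc 0 T) := hFc.mono (fun s hs => hs.1)
        rw [hEfdef]
        exact (((hFcT.snd).pow 2).div_const 2).add
          ((continuousOn_const.mul ((hFcT.fst).pow (p + 1))).div_const P1)
      · intro s hs
        exact (hderivE s hs).differentiableAt.differentiableWithinAt
      · intro s hs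
        rw [(hderivE s hs).deriv]
        have : 0 ≤ μ * (F s).2 ^ 2 := mul_nonneg hμ (sq_nonneg _)
        linarith
    have hET : Efun T ≤ E₀ := by
      have := hanti (left_mem_Icc.2 hT0) (right_mem_Icc.2 hT0) hT0
      rwa [hEfun0] at this
    have hTr : |(F T).1| ≤ r ∧ |(F T).2| ≤ r := by
      apply energy_bound (F T).1 (F T).2
      rw [← hEfeq T]
      exact hET
    obtain ⟨δ, hδ0, hδ⟩ : ∃ δ > 0, ∀ s ∈ Ici (0:ℝ), dist s T < δ → dist (F s) (F T) < 1 := by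
      have hco := hFc T hT0
      rcases Metric.continuousWithinAt_iff.1 hco 1 one_pos with ⟨δ, hδ0, h⟩
      exact ⟨δ, hδ0, fun s hs hd => h hs hd⟩
    have hnotA : ∀ s, 0 ≤ s → s < T + δ → s ∉ A := by
      intro s hs0 hsTδ hsA
      rcases lt_or_ge s T with h | h
      · exact absurd (hlow s hs0 h) (not_le.2 hsA.2)
      · have hd : dist s T < δ := by
          rw [Real.dist_eq, abs_of_nonneg (sub_nonneg.2 h)]; linarith
        have h1 := hδ s hs0 hd
        have h2 : |(F s).1 - (F T).1| ≤ dist (F s) (F T) := by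
          rw [Prod.dist_eq, ← Real.dist_eq]; exact le_max_left _ _
        have h3 : |(F s).2 - (F T).2| ≤ dist (F s) (F T) := by
          rw [Prod.dist_eq, ← Real.dist_eq]; exact le_max_right _ _
        have hb1 : |(F s).1| ≤ B := by
          have := abs_sub_abs_le_abs_sub (F s).1 (F T).1
          rw [hBdef]
          linarith [hTr.1]
        have hb2 : |(F s).2| ≤ B := by
          have := abs_sub_abs_le_abs_sub (F s).2 (F T).2
          rw [hBdef]
          linarith [hTr.2]
        exact absurd hsA.2 (not_lt.2 (max_le hb1 hb2))
    have hTlt : sInf A < T + δ := by rw [← hTdef]; linarith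
    obtain ⟨a, haA, ha⟩ := exists_lt_of_csInf_lt hAne hTlt
    exact hnotA a haA.1 ha haA
  -- conclusion
  refine ⟨fun t => (F t).1, fun t => (F t).2, ?_, ?_, ?_, ?_⟩
  · intro t ht
    have h := hFderiv t ht
    have hbd := hFbound t ht
    have hcl2 : clamp (F t).2 = (F t).2 :=
      hclamp_eq _ (((le_max_right _ _).trans hbd).trans hBM)
    have h1 := (ContinuousLinearMap.fst ℝ ℝ ℝ).hasFDerivAt.comp_hasDerivWithinAt t h
    have hval : (g (F t)).1 = (F t).2 := by rw [hg1' (F t)]; exact hcl2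
    simpa [hval, Function.comp_def] using h1
  · intro t ht
    have h := hFderiv t ht
    have hbd := hFbound t ht
    have hcl1 : clamp (F t).1 = (F t).1 :=
      hclamp_eq _ (((le_max_left _ _).trans hbd).trans hBM)
    have hcl2 : clamp (F t).2 = (F t).2 :=
      hclamp_eq _ (((le_max_right _ _).trans hbd).trans hBM)
    have h2 := (ContinuousLinearMap.snd ℝ ℝ ℝ).hasFDerivAt.comp_hasDerivWithinAt t h
    have hval : (g (F t)).2 = -(μ * (F t).2) - α * (F t).1 ^ p := by
      rw [hg2' (F t), hcl1, hcl2]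
    simpa [hval, Function.comp_def] using h2
  · show (F 0).1 = x₀
    rw [hF0]
  · show (F 0).2 = x₁
    rw [hF0]
end

section
/- Let p ≥ 3 be an odd natural number, μ ≥ 0 and α > 0. If x and z are both twice continuously differentiable functions on [0, ∞) satisfying x'' + μ x' + α x^p = 0 with the same initial data x(0) = z(0) = x₀ and x'(0) = z'(0) = x₁, then x(t) = z(t) for all t ≥ 0. -/
open Set

lemma abs_pow_sub_pow_le' {a b R : ℝ} (n : ℕ) (ha : |a| ≤ R) (hb : |b| ≤ R) :
    |a ^ n - b ^ n| ≤ (n : ℝ) * R ^ (n - 1) * |a - b| := by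
  have hR : 0 ≤ R := le_trans (abs_nonneg a) ha
  rw [← geom_sum₂_mul a b n, abs_mul]
  have hsum : |∑ i ∈ Finset.range n, a ^ i * b ^ (n - 1 - i)| ≤ (n : ℝ) * R ^ (n - 1) := by
    calc |∑ i ∈ Finset.range n, a ^ i * b ^ (n - 1 - i)|
        ≤ ∑ i ∈ Finset.range n, |a ^ i * b ^ (n - 1 - i)| := Finset.abs_sum_le_sum_abs _ _
      _ ≤ ∑ _i ∈ Finset.range n, R ^ (n - 1) := by
          apply Finset.sum_le_sum
          intro i hi
          rw [abs_mul, abs_pow, abs_pow]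
          calc |a| ^ i * |b| ^ (n - 1 - i) ≤ R ^ i * R ^ (n - 1 - i) := by
                exact mul_le_mul (pow_le_pow_left₀ (abs_nonneg a) ha i)
                  (pow_le_pow_left₀ (abs_nonneg b) hb _) (by positivity) (by positivity)
            _ = R ^ (i + (n - 1 - i)) := (pow_add R i _).symm
            _ = R ^ (n - 1) := by
                congr 1
                have := Finset.mem_range.mp hi
                omega
      _ = (n : ℝ) * R ^ (n - 1) := by
          rw [Finset.sum_const, Finset.card_range, nsmul_eq_mul]
  exact mul_le_mul_of_nonneg_right hsum (abs_nonneg _)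

/-- Uniqueness of C² solutions to the Duffing-type equation
`x'' + μ x' + α x^p = 0` on `[0, ∞)` with the same initial data. -/
theorem duffing_uniqueness
    (p : ℕ) (hp : 3 ≤ p) (hodd : Odd p)
    (μ α : ℝ) (hμ : 0 ≤ μ) (hα : 0 < α) (x₀ x₁ : ℝ)
    (x x' z z' : ℝ → ℝ)
    (hx : ∀ t ∈ Ici (0:ℝ), HasDerivWithinAt x (x' t) (Ici 0) t)
    (hx' : ∀ t ∈ Ici (0:ℝ),
      HasDerivWithinAt x' (-(μ * x' t) - α * x t ^ p) (Ici 0) t)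
    (hz : ∀ t ∈ Ici (0:ℝ), HasDerivWithinAt z (z' t) (Ici 0) t)
    (hz' : ∀ t ∈ Ici (0:ℝ),
      HasDerivWithinAt z' (-(μ * z' t) - α * z t ^ p) (Ici 0) t)
    (hx0 : x 0 = x₀) (hx1 : x' 0 = x₁)
    (hz0 : z 0 = x₀) (hz1 : z' 0 = x₁) :
    ∀ t ≥ (0:ℝ), x t = z t := by
  intro b hb
  -- continuity of all functions on [0, b]
  have hIcc : Icc (0:ℝ) b ⊆ Ici 0 := fun t ht => ht.1
  have hxc : ContinuousOn x (Icc 0 b) :=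
    (fun t ht => ((hx t (hIcc ht)).continuousWithinAt.mono hIcc))
  have hzc : ContinuousOn z (Icc 0 b) :=
    (fun t ht => ((hz t (hIcc ht)).continuousWithinAt.mono hIcc))
  have hx'c : ContinuousOn x' (Icc 0 b) :=
    (fun t ht => ((hx' t (hIcc ht)).continuousWithinAt.mono hIcc))
  have hz'c : ContinuousOn z' (Icc 0 b) :=
    (fun t ht => ((hz' t (hIcc ht)).continuousWithinAt.mono hIcc))
  -- bound on trajectories
  obtain ⟨Cx, hCx⟩ := (isCompact_Icc (a := (0:ℝ)) (b := b)).exists_bound_of_continuousOn hxc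
  obtain ⟨Cz, hCz⟩ := (isCompact_Icc (a := (0:ℝ)) (b := b)).exists_bound_of_continuousOn hzc
  set R : ℝ := max Cx Cz with hRdef
  have hxR : ∀ t ∈ Icc (0:ℝ) b, |x t| ≤ R :=
    fun t ht => le_trans (hCx t ht) (le_max_left _ _)
  have hzR : ∀ t ∈ Icc (0:ℝ) b, |z t| ≤ R :=
    fun t ht => le_trans (hCz t ht) (le_max_right _ _)
  have hR0 : 0 ≤ R := le_trans (abs_nonneg (x 0)) (hxR 0 ⟨le_refl 0, hb⟩)
  -- the difference function
  set F : ℝ → ℝ × ℝ := fun t => (x t - z t, x' t - z' t) with hF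
  set F' : ℝ → ℝ × ℝ := fun t =>
    (x' t - z' t, (-(μ * x' t) - α * x t ^ p) - (-(μ * z' t) - α * z t ^ p)) with hF'
  set K : ℝ := 1 + μ + α * ((p : ℝ) * R ^ (p - 1)) with hK
  have hFc : ContinuousOn F (Icc 0 b) := (hxc.sub hzc).prodMk (hx'c.sub hz'c)
  have hFd : ∀ t ∈ Ico (0:ℝ) b, HasDerivWithinAt F (F' t) (Ici t) t := by
    intro t ht
    have h1 : Ici t ⊆ Ici (0:ℝ) := Ici_subset_Ici.mpr ht.1
    exact HasDerivWithinAt.prodMk (((hx t ht.1).sub (hz t ht.1)).mono h1)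
      ((((hx' t ht.1).sub (hz' t ht.1))).mono h1)
  have hbound : ∀ t ∈ Ico (0:ℝ) b, ‖F' t‖ ≤ K * ‖F t‖ + 0 := by
    intro t ht
    have htIcc : t ∈ Icc (0:ℝ) b := ⟨ht.1, le_of_lt ht.2⟩
    have h1 : |x t - z t| ≤ ‖F t‖ := norm_fst_le (F t)
    have h2 : |x' t - z' t| ≤ ‖F t‖ := norm_snd_le (F t)
    have hFn : 0 ≤ ‖F t‖ := norm_nonneg _
    have hpow : |x t ^ p - z t ^ p| ≤ (p : ℝ) * R ^ (p - 1) * |x t - z t| :=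
      abs_pow_sub_pow_le' p (hxR t htIcc) (hzR t htIcc)
    rw [add_zero, Prod.norm_def]
    apply max_le
    · calc ‖(F' t).1‖ = |x' t - z' t| := rfl
        _ ≤ ‖F t‖ := h2
        _ ≤ K * ‖F t‖ := by
            nlinarith [mul_nonneg (mul_nonneg hα.le (mul_nonneg (Nat.cast_nonneg p : (0:ℝ) ≤ p)
              (pow_nonneg hR0 (p-1)))) hFn, mul_nonneg hμ hFn]
    · have heq : (F' t).2 = -(μ * (x' t - z' t)) - α * (x t ^ p - z t ^ p) := by
        simp only [hF']; ring
      calc ‖(F' t).2‖ = |(-(μ * (x' t - z' t)) - α * (x t ^ p - z t ^ p))| := by rw [heq]; rfl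
        _ ≤ |μ * (x' t - z' t)| + |α * (x t ^ p - z t ^ p)| := by
            refine le_trans (abs_sub _ _) ?_
            rw [abs_neg]
        _ = μ * |x' t - z' t| + α * |x t ^ p - z t ^ p| := by
            rw [abs_mul, abs_mul, abs_of_nonneg hμ, abs_of_nonneg hα.le]
        _ ≤ μ * ‖F t‖ + α * ((p:ℝ) * R ^ (p-1) * |x t - z t|) := by
            refine add_le_add (mul_le_mul_of_nonneg_left h2 hμ)
              (mul_le_mul_of_nonneg_left hpow hα.le)
        _ ≤ μ * ‖F t‖ + α * ((p:ℝ) * R ^ (p-1)) * ‖F t‖ := by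
            refine add_le_add le_rfl ?_
            have hcoef : 0 ≤ α * ((p:ℝ) * R ^ (p-1)) := by positivity
            calc α * ((p:ℝ) * R ^ (p-1) * |x t - z t|)
                = α * ((p:ℝ) * R ^ (p-1)) * |x t - z t| := by ring
              _ ≤ α * ((p:ℝ) * R ^ (p-1)) * ‖F t‖ := mul_le_mul_of_nonneg_left h1 hcoef
        _ ≤ K * ‖F t‖ := by nlinarith
  have hF0 : ‖F 0‖ ≤ 0 := by
    have : F 0 = 0 := by
      simp only [hF, hx0, hz0, hx1, hz1, sub_self]; rfl
    rw [this, norm_zero]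
  have := norm_le_gronwallBound_of_norm_deriv_right_le hFc hFd hF0 hbound b ⟨hb, le_refl b⟩
  rw [gronwallBound_ε0_δ0] at this
  have hFb : F b = 0 := norm_le_zero_iff.mp this
  have : x b - z b = 0 := congrArg Prod.fst hFb
  linarith
end

section
/- Let p ≥ 3 be an odd natural number, μ > 0 and α > 0, and let x ∈ C²([0, ∞)) be a solution of x''(t) + μ x'(t) + α x(t)^p = 0 with x(0) = x₀ and x'(0) = x₁. Then there exists a positive constant C* > 0 (depending on the data) such that |x(t)| ≤ C* t^{-1/(p-1)} for all t > 0. -/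
open Set Real

set_option maxHeartbeats 1000000

lemma gronwall_pow (V Vd : ℝ → ℝ) (c q : ℝ) (hc : 0 < c) (hq : 1 < q)
    (hVcont : ContinuousOn V (Ici 0))
    (hVderiv : ∀ t ∈ Ioi (0:ℝ), HasDerivAt V (Vd t) t)
    (hVnonneg : ∀ t ∈ Ici (0:ℝ), 0 ≤ V t)
    (hVineq : ∀ t ∈ Ioi (0:ℝ), Vd t ≤ -c * V t ^ q) :
    ∀ t > (0:ℝ), V t ≤ ((q-1)*c*t) ^ (-(1/(q-1))) := by
  have hq1 : q - 1 ≠ 0 := by linarith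
  have hanti : AntitoneOn V (Ici 0) := by
    apply antitoneOn_of_hasDerivWithinAt_nonpos (convex_Ici 0) hVcont
      (f' := Vd)
    · intro s hs
      rw [interior_Ici] at hs ⊢
      exact (hVderiv s hs).hasDerivWithinAt
    · intro s hs
      rw [interior_Ici] at hs
      have h1 := hVineq s hs
      have h2 : 0 ≤ V s ^ q := Real.rpow_nonneg (hVnonneg s (mem_Ici.mpr (le_of_lt (mem_Ioi.mp hs)))) q
      nlinarith
  intro t ht
  have hq0 : 0 < q - 1 := by linarith
  have hBpos : 0 < (q-1)*c*t := by positivity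
  rcases eq_or_lt_of_le (hVnonneg t (le_of_lt ht)) with h0 | hVt
  · rw [← h0]; positivity
  -- V positive on [0, t]
  have hVpos : ∀ s ∈ Icc (0:ℝ) t, 0 < V s := fun s hs =>
    lt_of_lt_of_le hVt (hanti hs.1 (le_of_lt ht) hs.2)
  -- W is monotone on [0, t]
  set W : ℝ → ℝ := fun s => V s ^ (1 - q) - (q-1)*c*s with hW
  have hmono : MonotoneOn W (Icc 0 t) := by
    apply monotoneOn_of_hasDerivWithinAt_nonneg (convex_Icc 0 t)
      (f' := fun s => (1-q) * V s ^ (-q) * Vd s - (q-1)*c)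
    · apply ContinuousOn.sub
      · exact (hVcont.mono (Icc_subset_Ici_self)).rpow_const
          (fun s hs => Or.inl (ne_of_gt (hVpos s hs)))
      · fun_prop
    · intro s hs
      rw [interior_Icc] at hs
      have hds : HasDerivAt (fun s => V s ^ (1-q)) ((1-q) * V s ^ (1-q-1) * Vd s) s := by
        have := (hVderiv s hs.1).rpow_const (p := 1-q)
          (Or.inl (ne_of_gt (hVpos s ⟨le_of_lt hs.1, le_of_lt hs.2⟩)))
        convert this using 1; ring
      have : HasDerivAt W ((1-q) * V s ^ (1-q-1) * Vd s - (q-1)*c) s := by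
        exact (hds.sub (((hasDerivAt_id s).const_mul ((q-1)*c)))).congr_deriv (by ring)
      have he : (1:ℝ) - q - 1 = -q := by ring
      rw [he] at this
      exact this.hasDerivWithinAt
    · intro s hs
      rw [interior_Icc] at hs
      have hVs : 0 < V s := hVpos s ⟨le_of_lt hs.1, le_of_lt hs.2⟩
      have h1 := hVineq s hs.1
      have h2 : 0 < V s ^ (-q) := Real.rpow_pos_of_pos hVs _
      have key : (1-q) * V s ^ (-q) * Vd s ≥ (1-q) * V s ^ (-q) * (-c * V s ^ q) := by
        apply mul_le_mul_of_nonpos_left h1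
        apply mul_nonpos_of_nonpos_of_nonneg (by linarith) (le_of_lt h2)
      have h3 : V s ^ (-q) * V s ^ q = 1 := by
        rw [← Real.rpow_add hVs]; simp
      nlinarith [key]
  have hWineq := hmono (show (0:ℝ) ∈ Icc 0 t from ⟨le_refl 0, le_of_lt ht⟩)
    (show t ∈ Icc 0 t from ⟨le_of_lt ht, le_refl t⟩) (le_of_lt ht)
  have hV0 : 0 < V 0 ^ (1-q) := Real.rpow_pos_of_pos (hVpos 0 ⟨le_refl 0, le_of_lt ht⟩) _
  have hkey : (q-1)*c*t ≤ V t ^ (1-q) := by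
    simp only [hW, mul_zero, sub_zero] at hWineq
    linarith
  -- conclude
  have h1q : (1:ℝ) - q ≠ 0 := by linarith
  have := Real.rpow_le_rpow_of_nonpos hBpos hkey
    (show 1/(1-q) ≤ 0 by
      apply div_nonpos_of_nonneg_of_nonpos zero_le_one; linarith)
  calc V t = (V t ^ (1-q)) ^ (1/(1-q)) := by
        rw [← Real.rpow_mul hVt.le, mul_one_div, div_self h1q, Real.rpow_one]
    _ ≤ ((q-1)*c*t) ^ (1/(1-q)) := this
    _ = ((q-1)*c*t) ^ (-(1/(q-1))) := by
        congr 1; field_simp; ring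

/-- Decay estimate for solutions of the Duffing-type equation
with positive damping: `|x(t)| ≤ C* t^(-1/(p-1))` for `t > 0`. -/
theorem duffing_solution_decay
    (p : ℕ) (hp : 3 ≤ p) (hodd : Odd p)
    (μ α : ℝ) (hμ : 0 < μ) (hα : 0 < α) (x₀ x₁ : ℝ)
    (x x' : ℝ → ℝ)
    (hx : ∀ t ∈ Ici (0:ℝ), HasDerivWithinAt x (x' t) (Ici 0) t)
    (hx' : ∀ t ∈ Ici (0:ℝ),
      HasDerivWithinAt x' (-(μ * x' t) - α * x t ^ p) (Ici 0) t)
    (hx0 : x 0 = x₀) (hx1 : x' 0 = x₁) :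
    ∃ C : ℝ, 0 < C ∧ ∀ t : ℝ, 0 < t →
      |x t| ≤ C * t ^ (-(1 / ((p : ℝ) - 1))) := by
  have hp1 : ((p:ℝ) + 1) ≠ 0 := by positivity
  have hp3 : (3:ℝ) ≤ (p:ℝ) := by exact_mod_cast hp
  have hpeven : Even (p - 1) := Nat.Odd.sub_odd hodd odd_one
  have hp1even : Even (p + 1) := hodd.add_one
  have hxD : ∀ t ∈ Ioi (0:ℝ), HasDerivAt x (x' t) t := fun t ht =>
    (hx t (mem_Ici.mpr (le_of_lt (mem_Ioi.mp ht)))).hasDerivAt (Ici_mem_nhds ht)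
  have hx'D : ∀ t ∈ Ioi (0:ℝ), HasDerivAt x' (-(μ * x' t) - α * x t ^ p) t := fun t ht =>
    (hx' t (mem_Ici.mpr (le_of_lt (mem_Ioi.mp ht)))).hasDerivAt (Ici_mem_nhds ht)
  have hxc : ContinuousOn x (Ici 0) := fun t ht => (hx t ht).continuousWithinAt
  have hx'c : ContinuousOn x' (Ici 0) := fun t ht => (hx' t ht).continuousWithinAt
  obtain ⟨E, hEdef⟩ : ∃ E : ℝ → ℝ, E = fun t => x' t ^ 2 / 2 + α / ((p:ℝ)+1) * x t ^ (p+1) :=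
    ⟨_, rfl⟩
  have hEc : ContinuousOn E (Ici 0) := by
    rw [hEdef]
    exact ((hx'c.pow 2).div_const 2).add (continuousOn_const.mul (hxc.pow (p+1)))
  have hED : ∀ t ∈ Ioi (0:ℝ), HasDerivAt E (-(μ * x' t ^ 2)) t := by
    intro t ht
    have h1 : HasDerivAt (fun s => x' s ^ 2 / 2)
        ((2 * x' t ^ 1 * (-(μ * x' t) - α * x t ^ p)) / 2) t := ((hx'D t ht).pow 2).div_const 2
    have h2 : HasDerivAt (fun s => α / ((p:ℝ)+1) * x s ^ (p+1))
        (α / ((p:ℝ)+1) * ((↑(p+1) : ℝ) * x t ^ (p+1-1) * x' t)) t :=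
      ((hxD t ht).pow (p+1)).const_mul _
    have h3 := h1.add h2
    rw [hEdef]
    refine h3.congr_deriv ?_
    simp only [Nat.add_sub_cancel, Nat.cast_add, Nat.cast_one, pow_one]
    field_simp
    ring
  have hxppos : ∀ t, (0:ℝ) ≤ x t ^ (p+1) := fun t => hp1even.pow_nonneg _
  have hEnn : ∀ t, 0 ≤ E t := by
    intro t
    have h1 : (0:ℝ) ≤ x' t ^ 2 / 2 := by positivity
    have h2 : (0:ℝ) ≤ α / ((p:ℝ)+1) * x t ^ (p+1) := by
      apply mul_nonneg (by positivity) (hxppos t)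
    simp only [hEdef]; linarith
  have hEanti : AntitoneOn E (Ici 0) := by
    apply antitoneOn_of_hasDerivWithinAt_nonpos (convex_Ici 0) hEc
      (f' := fun t => -(μ * x' t ^ 2))
    · intro s hs; rw [interior_Ici] at hs ⊢; exact (hED s hs).hasDerivWithinAt
    · intro s hs; nlinarith [sq_nonneg (x' s)]
  have hE0 : ∀ t ∈ Ici (0:ℝ), E t ≤ E 0 := fun t ht => hEanti (mem_Ici.mpr le_rfl) ht ht
  -- bound on |x|
  obtain ⟨K, hKdef⟩ : ∃ K : ℝ, K = max 1 (((p:ℝ)+1) * E 0 / α) := ⟨_, rfl⟩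
  have hK1 : (1:ℝ) ≤ K := hKdef ▸ le_max_left _ _
  have hxp1_le : ∀ t ∈ Ici (0:ℝ), x t ^ (p+1) ≤ ((p:ℝ)+1) * E 0 / α := by
    intro t ht
    have h1 := hE0 t ht
    have h2 : α / ((p:ℝ)+1) * x t ^ (p+1) ≤ E t := by
      have : (0:ℝ) ≤ x' t ^ 2 / 2 := by positivity
      simp only [hEdef]; linarith
    rw [le_div_iff₀ hα]
    calc x t ^ (p+1) * α = (α / ((p:ℝ)+1) * x t ^ (p+1)) * ((p:ℝ)+1) := by
          field_simp
      _ ≤ E 0 * ((p:ℝ)+1) := by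
          apply mul_le_mul_of_nonneg_right (le_trans h2 h1) (by positivity)
      _ = ((p:ℝ)+1) * E 0 := by ring
  have hx_le : ∀ t ∈ Ici (0:ℝ), |x t| ≤ K := by
    intro t ht
    rcases le_total (|x t|) 1 with h | h
    · exact le_trans h hK1
    · have h1 : |x t| ≤ |x t| ^ (p+1) := le_self_pow₀ h (by omega)
      have h2 : |x t| ^ (p+1) = x t ^ (p+1) := hp1even.pow_abs _
      exact le_trans (h1.trans_eq h2) (le_trans (hxp1_le t ht) (hKdef ▸ le_max_right _ _))
  have hx'2_le : ∀ t ∈ Ici (0:ℝ), x' t ^ 2 ≤ 2 * E 0 := by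
    intro t ht
    have h1 := hE0 t ht
    have h2 : (0:ℝ) ≤ α / ((p:ℝ)+1) * x t ^ (p+1) := mul_nonneg (by positivity) (hxppos t)
    simp only [hEdef] at h1 ⊢; nlinarith
  -- even power rewriting facts
  have hxev : ∀ t ∈ Ici (0:ℝ), x t ^ (p-1) ≤ K ^ (p-1) := by
    intro t ht
    calc x t ^ (p-1) = |x t| ^ (p-1) := (hpeven.pow_abs _).symm
      _ ≤ K ^ (p-1) := pow_le_pow_left₀ (abs_nonneg _) (hx_le t ht) _
  have hxevnn : ∀ t, (0:ℝ) ≤ x t ^ (p-1) := fun t => hpeven.pow_nonneg _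
  have hsplit : ∀ t, x t ^ p * x t ^ p = x t ^ (p+1) * x t ^ (p-1) := by
    intro t; rw [← pow_add, ← pow_add]; congr 1; omega
  -- trivial case: zero initial energy
  rcases eq_or_lt_of_le (hEnn 0) with hE0z | hE0pos
  · refine ⟨1, one_pos, fun t ht => ?_⟩
    have h1 : E t ≤ 0 := le_trans (hE0 t (le_of_lt ht)) (le_of_eq hE0z.symm)
    have h2 : α / ((p:ℝ)+1) * x t ^ (p+1) ≤ E t := by
      have : (0:ℝ) ≤ x' t ^ 2 / 2 := by positivity
      simp only [hEdef]; linarith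
    have h3 : x t ^ (p+1) ≤ 0 := by
      have hap : (0:ℝ) < α / ((p:ℝ)+1) := by positivity
      by_contra hcon
      push_neg at hcon
      nlinarith [mul_pos hap hcon]
    have h4 : x t = 0 := by
      have := pow_eq_zero_iff (n := p+1) (by omega) |>.mp (le_antisymm h3 (hxppos t))
      exact this
    rw [h4, abs_zero]
    positivity
  -- main case
  obtain ⟨c₀, hc₀def⟩ : ∃ c₀ : ℝ, c₀ = 1 + K^(p-1) * ((p:ℝ)+1)/(2*α) := ⟨_, rfl⟩
  have hc₀pos : 0 < c₀ := by
    have : (0:ℝ) < K ^ (p-1) := by positivity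
    have h' : 0 < K^(p-1) * ((p:ℝ)+1)/(2*α) := by positivity
    rw [hc₀def]; linarith
  obtain ⟨ε, hεdef⟩ : ∃ ε : ℝ, ε = min (μ / (2*(μ^2/(2*α) + (p:ℝ) * K^(p-1)))) (1/(2*c₀)) :=
    ⟨_, rfl⟩
  have hKp : (0:ℝ) < K ^ (p-1) := by positivity
  have hDen : (0:ℝ) < μ^2/(2*α) + (p:ℝ) * K^(p-1) := by positivity
  have hεpos : 0 < ε := hεdef ▸ lt_min (by positivity) (by positivity)
  have hε1 : ε * (μ^2/(2*α) + (p:ℝ) * K^(p-1)) ≤ μ / 2 := by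
    have h := min_le_left (μ / (2*(μ^2/(2*α) + (p:ℝ) * K^(p-1)))) (1/(2*c₀))
    rw [← hεdef] at h
    rw [le_div_iff₀ (by positivity)] at h
    nlinarith
  have hε2 : ε * c₀ ≤ 1/2 := by
    have h := min_le_right (μ / (2*(μ^2/(2*α) + (p:ℝ) * K^(p-1)))) (1/(2*c₀))
    rw [← hεdef] at h
    rw [le_div_iff₀ (by positivity)] at h
    nlinarith
  obtain ⟨V, hVdef⟩ : ∃ V : ℝ → ℝ, V = fun t => E t + ε * (x' t * x t ^ p) := ⟨_, rfl⟩
  obtain ⟨Vd, hVddef⟩ : ∃ Vd : ℝ → ℝ, Vd = fun t => -(μ * x' t ^ 2) +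
      ε * ((-(μ * x' t) - α * x t ^ p) * x t ^ p + x' t * ((p:ℝ) * x t ^ (p-1) * x' t)) :=
    ⟨_, rfl⟩
  have hVc : ContinuousOn V (Ici 0) := by
    rw [hVdef]
    exact hEc.add (continuousOn_const.mul (hx'c.mul (hxc.pow p)))
  have hVD : ∀ t ∈ Ioi (0:ℝ), HasDerivAt V (Vd t) t := by
    intro t ht
    have h1 : HasDerivAt (fun s => x' s * x s ^ p)
        ((-(μ * x' t) - α * x t ^ p) * x t ^ p + x' t * ((↑p:ℝ) * x t ^ (p-1) * x' t)) t :=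
      (hx'D t ht).mul ((hxD t ht).pow p)
    rw [hVdef, hVddef]
    exact (hED t ht).add (h1.const_mul ε)
  -- |x' * x^p| ≤ c₀ * E
  have hFE : ∀ t ∈ Ici (0:ℝ), |x' t * x t ^ p| ≤ c₀ * E t := by
    intro t ht
    have habs : |x' t * x t ^ p| ≤ x' t ^ 2 / 2 + (x t ^ p)^2 / 2 := by
      rw [abs_mul]
      nlinarith [sq_abs (x' t), sq_abs (x t ^ p), sq_nonneg (|x' t| - |x t ^ p|),
        abs_nonneg (x' t), abs_nonneg (x t ^ p)]
    have h2 : (x t ^ p)^2 = x t ^ (p+1) * x t ^ (p-1) := by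
      rw [sq]; exact hsplit t
    have h3 : (x t ^ p)^2 ≤ K^(p-1) * x t ^ (p+1) := by
      rw [h2]
      calc x t ^ (p+1) * x t ^ (p-1) ≤ x t ^ (p+1) * K ^ (p-1) :=
            mul_le_mul_of_nonneg_left (hxev t ht) (hxppos t)
        _ = K^(p-1) * x t ^ (p+1) := by ring
    have h4 : x' t ^ 2 / 2 ≤ E t := by
      have : (0:ℝ) ≤ α / ((p:ℝ)+1) * x t ^ (p+1) := mul_nonneg (by positivity) (hxppos t)
      simp only [hEdef]; linarith
    have h5 : α / ((p:ℝ)+1) * x t ^ (p+1) ≤ E t := by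
      have : (0:ℝ) ≤ x' t ^ 2 / 2 := by positivity
      simp only [hEdef]; linarith
    have h6 : K^(p-1) * x t ^ (p+1) / 2 ≤ K^(p-1) * ((p:ℝ)+1)/(2*α) * E t := by
      have hxE : x t ^ (p+1) ≤ ((p:ℝ)+1)/α * E t := by
        rw [div_mul_eq_mul_div, le_div_iff₀ hα]
        have h7 := mul_le_mul_of_nonneg_right h5 (show (0:ℝ) ≤ (p:ℝ)+1 by positivity)
        have h8 : α / ((p:ℝ)+1) * x t ^ (p+1) * ((p:ℝ)+1) = x t ^ (p+1) * α := by
          field_simp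
        rw [h8] at h7
        linarith
      calc K^(p-1) * x t ^ (p+1) / 2 ≤ K^(p-1) * (((p:ℝ)+1)/α * E t) / 2 := by
            have := mul_le_mul_of_nonneg_left hxE (le_of_lt hKp)
            linarith
        _ = K^(p-1) * ((p:ℝ)+1)/(2*α) * E t := by field_simp
    calc |x' t * x t ^ p| ≤ x' t ^ 2 / 2 + (x t ^ p)^2 / 2 := habs
      _ ≤ E t + K^(p-1) * ((p:ℝ)+1)/(2*α) * E t := by
          linarith [h6, h4, h3]
      _ = c₀ * E t := by rw [hc₀def]; ring
  -- comparison of V and E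
  have hEV : ∀ t ∈ Ici (0:ℝ), E t / 2 ≤ V t ∧ V t ≤ 2 * E t := by
    intro t ht
    have h1 := hFE t ht
    have h2 : |ε * (x' t * x t ^ p)| ≤ (1/2) * E t := by
      rw [abs_mul, abs_of_pos hεpos]
      calc ε * |x' t * x t ^ p| ≤ ε * (c₀ * E t) :=
            mul_le_mul_of_nonneg_left h1 (le_of_lt hεpos)
        _ = (ε * c₀) * E t := by ring
        _ ≤ (1/2) * E t := mul_le_mul_of_nonneg_right hε2 (hEnn t)
    have h3 := abs_le.mp h2
    simp only [hVdef]
    constructor <;> [linarith [h3.1]; linarith [h3.2]]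
  have hVnn : ∀ t ∈ Ici (0:ℝ), 0 ≤ V t := fun t ht =>
    le_trans (by linarith [hEnn t]) (hEV t ht).1
  -- the key differential inequality, part 1
  have hVd_le : ∀ t ∈ Ici (0:ℝ),
      Vd t ≤ -(μ/2) * x' t ^ 2 - (ε*α/2) * (x t ^ p)^2 := by
    intro t ht
    simp only [hVddef]
    have h1 : x t ^ (p-1) * x' t ^ 2 ≤ K ^ (p-1) * x' t ^ 2 :=
      mul_le_mul_of_nonneg_right (hxev t ht) (sq_nonneg _)
    have h2 : -(μ * (x' t * x t ^ p)) ≤ μ^2/(2*α) * x' t ^ 2 + α/2 * (x t ^ p)^2 := by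
      have key : μ^2/(2*α) * x' t ^ 2 + α/2 * (x t ^ p)^2 + μ * (x' t * x t ^ p)
          = (μ * x' t + α * x t ^ p)^2 / (2*α) := by
        field_simp; ring
      have h2' : (0:ℝ) ≤ (μ * x' t + α * x t ^ p)^2 / (2*α) :=
        div_nonneg (sq_nonneg _) (by positivity)
      linarith [key ▸ h2']
    have h3 := mul_le_mul_of_nonneg_left h1 (show (0:ℝ) ≤ (p:ℝ) * ε by positivity)
    have h4 := mul_le_mul_of_nonneg_left h2 (le_of_lt hεpos)
    have h5 := mul_le_mul_of_nonneg_right hε1 (sq_nonneg (x' t))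
    nlinarith [h3, h4, h5, pow_two (x t ^ p)]
  -- the exponent q
  obtain ⟨q, hqdef⟩ : ∃ q : ℝ, q = 2*(p:ℝ)/((p:ℝ)+1) := ⟨_, rfl⟩
  have hq1 : 1 < q := by
    rw [hqdef, lt_div_iff₀ (by positivity)]; linarith
  have hq0 : (0:ℝ) < q - 1 := by linarith
  have hqpos : (0:ℝ) < q := by linarith
  obtain ⟨A, hAdef⟩ : ∃ A : ℝ, A = 2 * E 0 := ⟨_, rfl⟩
  have hApos : 0 < A := by rw [hAdef]; linarith
  -- (u+v)^q ≤ 2^q (u^q + v^q)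
  have hsum_rpow : ∀ u v : ℝ, 0 ≤ u → 0 ≤ v → (u+v)^q ≤ 2^q * (u^q + v^q) := by
    intro u v hu hv
    have hmax : u + v ≤ 2 * max u v := by
      rcases le_total u v with h | h
      · rw [max_eq_right h]; linarith
      · rw [max_eq_left h]; linarith
    calc (u+v)^q ≤ (2 * max u v)^q :=
          Real.rpow_le_rpow (by positivity) hmax (le_of_lt hqpos)
      _ = 2^q * (max u v)^q := Real.mul_rpow (by norm_num) (le_max_iff.mpr (Or.inl hu))
      _ ≤ 2^q * (u^q + v^q) := by
          have h2q : (0:ℝ) ≤ (2:ℝ)^q := Real.rpow_nonneg (by norm_num) q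
          apply mul_le_mul_of_nonneg_left ?_ h2q
          rcases le_total u v with h | h
          · rw [max_eq_right h]
            linarith [Real.rpow_nonneg hu q]
          · rw [max_eq_left h]
            linarith [Real.rpow_nonneg hv q]
  -- (x'^2)^q ≤ A^(q-1) * x'^2
  have h_a2q : ∀ t ∈ Ici (0:ℝ), (x' t ^ 2)^q ≤ A^(q-1) * x' t ^ 2 := by
    intro t ht
    rcases eq_or_lt_of_le (sq_nonneg (x' t)) with h0 | hpos
    · rw [← h0, Real.zero_rpow (by linarith : q ≠ 0), mul_zero]
    · have h1 : (x' t ^ 2)^(q-1) * (x' t ^ 2)^(1:ℝ) = (x' t ^ 2)^q := by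
        rw [← Real.rpow_add hpos, sub_add_cancel]
      rw [← h1, Real.rpow_one]
      apply mul_le_mul_of_nonneg_right ?_ (sq_nonneg _)
      apply Real.rpow_le_rpow (sq_nonneg _) ?_ (le_of_lt hq0)
      rw [hAdef]; exact hx'2_le t ht
  -- (x^(p+1))^q = (x^p)^2
  have h_bq : ∀ t : ℝ, ((x t ^ (p+1) : ℝ))^q = (x t ^ p)^2 := by
    intro t
    have h1 : x t ^ (p+1) = |x t| ^ (p+1) := (hp1even.pow_abs _).symm
    rw [h1, ← Real.rpow_natCast |x t| (p+1), ← Real.rpow_mul (abs_nonneg _)]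
    have h2 : ((p+1 : ℕ):ℝ) * q = ((p*2 : ℕ):ℝ) := by
      push_cast; rw [hqdef]; field_simp
    rw [h2, Real.rpow_natCast, pow_mul, pow_abs, sq_abs]
  -- V^q ≤ D₁ x'^2 + D₂ (x^p)^2
  obtain ⟨D₂, hD₂def⟩ : ∃ D₂ : ℝ, D₂ = (1+α)^q * 2^q := ⟨_, rfl⟩
  have hD₂pos : 0 < D₂ := by
    rw [hD₂def]
    exact mul_pos (Real.rpow_pos_of_pos (by linarith) _) (Real.rpow_pos_of_pos two_pos _)
  obtain ⟨D₁, hD₁def⟩ : ∃ D₁ : ℝ, D₁ = D₂ * A^(q-1) := ⟨_, rfl⟩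
  have hD₁pos : 0 < D₁ := by
    rw [hD₁def]; exact mul_pos hD₂pos (Real.rpow_pos_of_pos hApos _)
  have hVq : ∀ t ∈ Ici (0:ℝ), V t ^ q ≤ D₁ * x' t ^ 2 + D₂ * (x t ^ p)^2 := by
    intro t ht
    have hcoef : 2*α/((p:ℝ)+1) ≤ 1+α := by
      rw [div_le_iff₀ (by positivity)]; nlinarith
    have hVle : V t ≤ (1+α) * (x' t ^ 2 + x t ^ (p+1)) := by
      have h1 := (hEV t ht).2
      have h2 : E t = x' t ^ 2 / 2 + α / ((p:ℝ)+1) * x t ^ (p+1) := by rw [hEdef]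
      have h3 : 2*α/((p:ℝ)+1) * x t ^ (p+1) ≤ (1+α) * x t ^ (p+1) :=
        mul_le_mul_of_nonneg_right hcoef (hxppos t)
      have h4 : x' t ^ 2 ≤ (1+α) * x' t ^ 2 := by nlinarith [sq_nonneg (x' t)]
      have h5 : V t ≤ x' t ^ 2 + 2*(α/((p:ℝ)+1)) * x t ^ (p+1) := by
        rw [h2] at h1; linarith
      have h6 : 2*(α/((p:ℝ)+1)) * x t ^ (p+1) = 2*α/((p:ℝ)+1) * x t ^ (p+1) := by
        ring
      rw [h6] at h5
      linarith [h3, h4, h5]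
    calc V t ^ q ≤ ((1+α) * (x' t ^ 2 + x t ^ (p+1)))^q :=
          Real.rpow_le_rpow (hVnn t ht) hVle (le_of_lt hqpos)
      _ = (1+α)^q * (x' t ^ 2 + x t ^ (p+1))^q := by
          apply Real.mul_rpow (by linarith)
          have := hxppos t; positivity
      _ ≤ (1+α)^q * (2^q * ((x' t ^ 2)^q + (x t ^ (p+1))^q)) := by
          apply mul_le_mul_of_nonneg_left
            (hsum_rpow _ _ (sq_nonneg _) (hxppos t))
            (Real.rpow_nonneg (by linarith) _)
      _ ≤ (1+α)^q * (2^q * (A^(q-1) * x' t ^ 2 + (x t ^ p)^2)) := by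
          apply mul_le_mul_of_nonneg_left ?_ (Real.rpow_nonneg (by linarith) _)
          apply mul_le_mul_of_nonneg_left ?_ (Real.rpow_nonneg (by norm_num) _)
          rw [h_bq t]
          linarith [h_a2q t ht]
      _ = D₁ * x' t ^ 2 + D₂ * (x t ^ p)^2 := by
          rw [hD₁def, hD₂def]; ring
  -- the constant c and the differential inequality
  obtain ⟨c, hcdef⟩ : ∃ c : ℝ, c = min ((μ/2)/D₁) ((ε*α/2)/D₂) := ⟨_, rfl⟩
  have hcpos : 0 < c := by
    rw [hcdef]
    exact lt_min (by positivity) (by positivity)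
  have hVineq : ∀ t ∈ Ioi (0:ℝ), Vd t ≤ -c * V t ^ q := by
    intro t ht
    have ht' : t ∈ Ici (0:ℝ) := mem_Ici.mpr (le_of_lt (mem_Ioi.mp ht))
    have h1 := hVd_le t ht'
    have h2 := hVq t ht'
    have h3 : c * V t ^ q ≤ c * (D₁ * x' t ^ 2 + D₂ * (x t ^ p)^2) :=
      mul_le_mul_of_nonneg_left h2 (le_of_lt hcpos)
    have h4 : c * D₁ ≤ μ/2 := by
      have := min_le_left ((μ/2)/D₁) ((ε*α/2)/D₂)
      rw [← hcdef] at this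
      rw [← le_div_iff₀ hD₁pos]; exact this
    have h5 : c * D₂ ≤ ε*α/2 := by
      have := min_le_right ((μ/2)/D₁) ((ε*α/2)/D₂)
      rw [← hcdef] at this
      rw [← le_div_iff₀ hD₂pos]; exact this
    have h6 := mul_le_mul_of_nonneg_right h4 (sq_nonneg (x' t))
    have h7 := mul_le_mul_of_nonneg_right h5 (sq_nonneg (x t ^ p))
    nlinarith [h1, h3, h6, h7]
  -- apply the Gronwall-type lemma
  have hdecay := gronwall_pow V Vd c q hcpos hq1 hVc hVD hVnn hVineq
  -- conclusion
  have hq1' : q - 1 = ((p:ℝ)-1)/((p:ℝ)+1) := by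
    rw [hqdef]
    field_simp
    ring
  have hp1' : (0:ℝ) < (p:ℝ) - 1 := by linarith
  obtain ⟨M, hMdef⟩ : ∃ M : ℝ, M = 2*((p:ℝ)+1)/α * ((q-1)*c)^(-(1/(q-1))) := ⟨_, rfl⟩
  have hMpos : 0 < M := by
    rw [hMdef]
    have : (0:ℝ) < ((q-1)*c)^(-(1/(q-1))) := Real.rpow_pos_of_pos (by positivity) _
    positivity
  refine ⟨M^((1:ℝ)/((p:ℝ)+1)), Real.rpow_pos_of_pos hMpos _, fun t ht => ?_⟩
  have ht' : t ∈ Ici (0:ℝ) := le_of_lt ht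
  have hd := hdecay t ht
  have hsplit2 : ((q-1)*c*t)^(-(1/(q-1))) = ((q-1)*c)^(-(1/(q-1))) * t^(-(1/(q-1))) :=
    Real.mul_rpow (by positivity) (le_of_lt ht)
  -- x t ^ (p+1) ≤ M * t ^ (-(1/(q-1)))
  have hxM : x t ^ (p+1) ≤ M * t^(-(1/(q-1))) := by
    have h5 : α / ((p:ℝ)+1) * x t ^ (p+1) ≤ E t := by
      have : (0:ℝ) ≤ x' t ^ 2 / 2 := by positivity
      simp only [hEdef]; linarith
    have h6 : E t ≤ 2 * V t := by linarith [(hEV t ht').1]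
    have h7 : α / ((p:ℝ)+1) * x t ^ (p+1)
        ≤ 2 * (((q-1)*c)^(-(1/(q-1))) * t^(-(1/(q-1)))) := by
      rw [← hsplit2]; linarith
    have h8 := mul_le_mul_of_nonneg_left h7 (show (0:ℝ) ≤ ((p:ℝ)+1)/α by positivity)
    have h9 : ((p:ℝ)+1)/α * (α/((p:ℝ)+1) * x t ^ (p+1)) = x t ^ (p+1) := by
      field_simp
    have h10 : ((p:ℝ)+1)/α * (2 * (((q-1)*c)^(-(1/(q-1))) * t^(-(1/(q-1)))))
        = M * t^(-(1/(q-1))) := by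
      rw [hMdef]; ring
    rw [h9, h10] at h8
    exact h8
  -- take (p+1)-th roots
  have h11 : |x t| = ((x t ^ (p+1) : ℝ))^((1:ℝ)/((p:ℝ)+1)) := by
    rw [← hp1even.pow_abs, ← Real.rpow_natCast |x t| (p+1),
      ← Real.rpow_mul (abs_nonneg _)]
    push_cast
    rw [mul_one_div, div_self hp1, Real.rpow_one]
  have h12 : ((x t ^ (p+1) : ℝ))^((1:ℝ)/((p:ℝ)+1))
      ≤ (M * t^(-(1/(q-1))))^((1:ℝ)/((p:ℝ)+1)) :=
    Real.rpow_le_rpow (hxppos t) hxM (by positivity)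
  have h13 : (M * t^(-(1/(q-1))))^((1:ℝ)/((p:ℝ)+1))
      = M^((1:ℝ)/((p:ℝ)+1)) * (t^(-(1/(q-1))))^((1:ℝ)/((p:ℝ)+1)) :=
    Real.mul_rpow (le_of_lt hMpos) (Real.rpow_nonneg (le_of_lt ht) _)
  have h14 : (t^(-(1/(q-1))))^((1:ℝ)/((p:ℝ)+1)) = t^(-(1/((p:ℝ)-1))) := by
    rw [← Real.rpow_mul (le_of_lt ht)]
    congr 1
    rw [hq1', one_div_div]
    have hne : ((p:ℝ)-1) ≠ 0 := by linarith
    field_simp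
  rw [h11]
  calc ((x t ^ (p+1) : ℝ))^((1:ℝ)/((p:ℝ)+1))
      ≤ (M * t^(-(1/(q-1))))^((1:ℝ)/((p:ℝ)+1)) := h12
    _ = M^((1:ℝ)/((p:ℝ)+1)) * t^(-(1/((p:ℝ)-1))) := by rw [h13, h14]
end

section
/- Let p ≥ 3 be an odd natural number, μ ≥ 0, α > 0, and let (x, y) be a C¹ solution on [0, ∞) of the system x' = y, y' = -α x^p - μ y. Define ℰ(t) := (1/2) y(t)² + (μ/2) x(t) y(t) + (μ²/4) x(t)² + (α/(p+1)) x(t)^{p+1} and ℋ(t) := (μ/2) y(t)² + (μα/2) x(t)^{p+1}. Then ℰ'(t) + ℋ(t) = 0 for all t ≥ 0. -/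
open Set

/-- The modified energy `ℰ`, written for an arbitrary pair of curves `x`, `y`. -/
noncomputable def duffingEnergy (p : ℕ) (μ α : ℝ) (x y : ℝ → ℝ) (s : ℝ) : ℝ :=
  (1/2) * y s ^ 2 + (μ/2) * x s * y s + (μ^2/4) * x s ^ 2 + (α / ((p : ℝ) + 1)) * x s ^ (p + 1)

theorem hasDerivWithinAt_duffingEnergy {p : ℕ} {μ α : ℝ} {x y : ℝ → ℝ} {x' y' t : ℝ}
    {s : Set ℝ} (hx : HasDerivWithinAt x x' s t) (hy : HasDerivWithinAt y y' s t) :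
    HasDerivWithinAt (duffingEnergy p μ α x y)
      (y t * y' + (μ/2) * (x' * y t + x t * y') + (μ^2/2) * x t * x' + α * x t ^ p * x') s t := by
  have hE := (((hy.pow 2).const_mul (1/2)).add ((hx.const_mul (μ/2)).mul hy)).add
    ((hx.pow 2).const_mul (μ^2/4)) |>.add ((hx.pow (p + 1)).const_mul (α / ((p : ℝ) + 1)))
  refine hE.congr_deriv ?_
  have hp : ((p : ℝ) + 1) ≠ 0 := by positivity
  push_cast
  field_simp
  ring

theorem duffing_modified_energy_derivative_general
    (p : ℕ)
    (μ α : ℝ)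
    (x y : ℝ → ℝ)
    (hx : ∀ t ∈ Ici (0:ℝ), HasDerivWithinAt x (y t) (Ici 0) t)
    (hy : ∀ t ∈ Ici (0:ℝ),
      HasDerivWithinAt y (-α * x t ^ p - μ * y t) (Ici 0) t) :
    ∀ t ∈ Ici (0:ℝ),
      HasDerivWithinAt
        (fun s => (1/2) * y s ^ 2 + (μ/2) * x s * y s + (μ^2/4) * x s ^ 2
          + (α / ((p : ℝ) + 1)) * x s ^ (p + 1))
        (-((μ/2) * y t ^ 2 + (μ * α / 2) * x t ^ (p + 1))) (Ici 0) t := by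
  intro t ht
  refine (hasDerivWithinAt_duffingEnergy (hx t ht) (hy t ht)).congr_deriv ?_
  ring

/-- For a C¹ solution of the system `x' = y, y' = -α x^p - μ y`,
the modified energy `ℰ(t) = (1/2) y² + (μ/2) x y + (μ²/4) x² + (α/(p+1)) x^(p+1)`
satisfies `ℰ'(t) + ℋ(t) = 0`, where `ℋ(t) = (μ/2) y² + (μα/2) x^(p+1)`,
i.e. `ℰ'(t) = -ℋ(t)`. -/
theorem duffing_modified_energy_derivative
    (p : ℕ) (hp : 3 ≤ p) (hodd : Odd p)
    (μ α : ℝ) (hμ : 0 ≤ μ) (hα : 0 < α)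
    (x y : ℝ → ℝ)
    (hx : ∀ t ∈ Ici (0:ℝ), HasDerivWithinAt x (y t) (Ici 0) t)
    (hy : ∀ t ∈ Ici (0:ℝ),
      HasDerivWithinAt y (-α * x t ^ p - μ * y t) (Ici 0) t) :
    ∀ t ∈ Ici (0:ℝ),
      HasDerivWithinAt
        (fun s => (1/2) * y s ^ 2 + (μ/2) * x s * y s + (μ^2/4) * x s ^ 2
          + (α / ((p : ℝ) + 1)) * x s ^ (p + 1))
        (-((μ/2) * y t ^ 2 + (μ * α / 2) * x t ^ (p + 1))) (Ici 0) t :=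
  duffing_modified_energy_derivative_general p μ α x y hx hy
end

section
/- Let p ≥ 3 be an odd natural number, μ > 0 and α > 0. Then there exists a constant C > 0 such that for all x, y ∈ ℝ, setting ℰ := (1/2) y² + (μ/2) x y + (μ²/4) x² + (α/(p+1)) x^{p+1} and ℋ := (μ/2) y² + (μα/2) x^{p+1}, one has ℰ^{(p+1)/2} ≤ C (1 + ℰ^{(p-1)/2}) ℋ. -/
set_option maxHeartbeats 1000000


/-- Key pointwise inequality between the modified energy
`ℰ = (1/2) y² + (μ/2) x y + (μ²/4) x² + (α/(p+1)) x^(p+1)` and the dissipation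
`ℋ = (μ/2) y² + (μα/2) x^(p+1)`:
there is `C > 0` with `ℰ^((p+1)/2) ≤ C (1 + ℰ^((p-1)/2)) ℰ`.
(Since `p` is odd, `(p+1)/2` and `(p-1)/2` are natural numbers.) -/
theorem modified_energy_dissipation_inequality
    (p : ℕ) (hp : 3 ≤ p) (hodd : Odd p)
    (μ α : ℝ) (hμ : 0 < μ) (hα : 0 < α) :
    ∃ C : ℝ, 0 < C ∧ ∀ x y : ℝ,
      ((1/2) * y ^ 2 + (μ/2) * x * y + (μ^2/4) * x ^ 2
        + (α / ((p : ℝ) + 1)) * x ^ (p + 1)) ^ ((p + 1) / 2)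
      ≤ C * (1 + ((1/2) * y ^ 2 + (μ/2) * x * y + (μ^2/4) * x ^ 2
            + (α / ((p : ℝ) + 1)) * x ^ (p + 1)) ^ ((p - 1) / 2))
          * ((μ/2) * y ^ 2 + (μ * α / 2) * x ^ (p + 1)) := by
  obtain ⟨m, hm⟩ := hodd
  have hp1 : (p + 1) / 2 = m + 1 := by omega
  have hp2 : (p - 1) / 2 = m := by omega
  have hpR : (0:ℝ) < (p : ℝ) + 1 := by positivity
  set c1 : ℝ := 1/2 + μ/4 + μ^2/4 with hc1
  have hc1pos : (0:ℝ) < c1 := by positivity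
  refine ⟨2^m * (c1^(m+1) * 2^m * (2/(μ*α) + 8^m * (2/μ)) + 2/(μ*((p:ℝ)+1))), by positivity, ?_⟩
  intro x y
  rw [hp1, hp2]
  set Q : ℝ := (1/2) * y ^ 2 + (μ/2) * x * y + (μ^2/4) * x ^ 2 with hQdef
  set P : ℝ := (α / ((p : ℝ) + 1)) * x ^ (p + 1) with hPdef
  set H : ℝ := (μ/2) * y ^ 2 + (μ * α / 2) * x ^ (p + 1) with hHdef
  have hxp : (0:ℝ) ≤ x ^ (p + 1) := by
    have h : x ^ (p + 1) = (x ^ (m + 1)) ^ 2 := by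
      rw [← pow_mul]; congr 1; omega
    rw [h]; positivity
  have hP : 0 ≤ P := by
    rw [hPdef]; exact mul_nonneg (by positivity) hxp
  have hQ : 0 ≤ Q := by
    rw [hQdef]; nlinarith [sq_nonneg (y + μ*x/2), sq_nonneg (μ*x)]
  have hE : 0 ≤ Q + P := add_nonneg hQ hP
  have hH : 0 ≤ H := by
    rw [hHdef]
    have := mul_nonneg (mul_nonneg hμ.le hα.le) hxp
    nlinarith [sq_nonneg y]
  have hy8 : y ^ 2 ≤ 8 * (Q + P) := by
    rw [hQdef]; nlinarith [sq_nonneg (3*y + 2*μ*x), sq_nonneg (μ*x), hP]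
  have hQc : Q ≤ c1 * (x^2 + y^2) := by
    rw [hQdef, hc1]
    nlinarith [mul_nonneg hμ.le (sq_nonneg (x - y)), mul_nonneg (mul_nonneg hμ.le hμ.le) (sq_nonneg y), sq_nonneg x]
  have hyH : y ^ 2 ≤ (2/μ) * H := by
    have h : (2/μ) * H = y^2 + α * x^(p+1) := by
      rw [hHdef]; field_simp
    rw [h]
    nlinarith [mul_nonneg hα.le hxp]
  have hxH : x ^ (p + 1) ≤ (2/(μ*α)) * H := by
    have h : (2/(μ*α)) * H = y^2/α + x^(p+1) := by
      rw [hHdef]; field_simp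
    rw [h]
    have : 0 ≤ y^2/α := by positivity
    linarith
  have hPH : P ≤ (2/(μ*((p:ℝ)+1))) * H := by
    have h : (2/(μ*((p:ℝ)+1))) * H = y^2/((p:ℝ)+1) + P := by
      rw [hHdef, hPdef]; field_simp
    rw [h]
    have : 0 ≤ y^2/((p:ℝ)+1) := by positivity
    linarith
  -- main chain
  have step1 : (Q + P) ^ (m + 1) ≤ 2 ^ m * (Q ^ (m+1) + P ^ (m+1)) := by
    simpa using add_pow_le hQ hP (m+1)
  have hQpow : Q ^ (m+1) ≤ c1^(m+1) * 2^m * ((x^2)^(m+1) + (y^2)^(m+1)) := by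
    calc Q ^ (m+1) ≤ (c1 * (x^2 + y^2)) ^ (m+1) := pow_le_pow_left₀ hQ hQc _
      _ = c1^(m+1) * (x^2 + y^2)^(m+1) := mul_pow _ _ _
      _ ≤ c1^(m+1) * (2^m * ((x^2)^(m+1) + (y^2)^(m+1))) := by
          refine mul_le_mul_of_nonneg_left ?_ (by positivity)
          simpa using add_pow_le (sq_nonneg x) (sq_nonneg y) (m+1)
      _ = c1^(m+1) * 2^m * ((x^2)^(m+1) + (y^2)^(m+1)) := by ring
  have hx2 : (x^2)^(m+1) = x ^ (p+1) := by rw [← pow_mul]; congr 1; omega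
  have hy2 : (y^2)^(m+1) ≤ 8^m * (Q+P)^m * ((2/μ) * H) := by
    calc (y^2)^(m+1) = (y^2)^m * y^2 := pow_succ _ _
      _ ≤ (8*(Q+P))^m * ((2/μ) * H) :=
          mul_le_mul (pow_le_pow_left₀ (sq_nonneg y) hy8 m) hyH (sq_nonneg y)
            (pow_nonneg (by linarith) m)
      _ = 8^m * (Q+P)^m * ((2/μ) * H) := by rw [mul_pow]
  have hPpow : P ^ (m+1) ≤ (Q+P)^m * ((2/(μ*((p:ℝ)+1))) * H) := by
    calc P ^ (m+1) = P^m * P := pow_succ _ _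
      _ ≤ (Q+P)^m * ((2/(μ*((p:ℝ)+1))) * H) :=
          mul_le_mul (pow_le_pow_left₀ hP (by linarith) m) hPH hP (pow_nonneg hE m)
  have hEm : 0 ≤ (Q+P)^m := pow_nonneg hE m
  have h2 : Q ^ (m+1) ≤ c1^(m+1) * 2^m * ((2/(μ*α)) * H + 8^m * (Q+P)^m * ((2/μ) * H)) := by
    refine hQpow.trans (mul_le_mul_of_nonneg_left ?_ (by positivity))
    rw [hx2]
    exact add_le_add hxH hy2
  have step2 : (2:ℝ) ^ m * (Q ^ (m+1) + P ^ (m+1)) ≤ 2 ^ m *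
      ((c1^(m+1) * 2^m * ((2/(μ*α)) * H + 8^m * (Q+P)^m * ((2/μ) * H)))
        + (Q+P)^m * ((2/(μ*((p:ℝ)+1))) * H)) :=
    mul_le_mul_of_nonneg_left (add_le_add h2 hPpow) (by positivity)
  have key : (Q + P) ^ (m + 1)
      ≤ 2^m * (c1^(m+1) * 2^m * (2/(μ*α) + 8^m * (2/μ)) + 2/(μ*((p:ℝ)+1)))
        * (1 + (Q+P)^m) * H := by
    refine (step1.trans step2).trans ?_
    have hint1 : (0:ℝ) ≤ 2^m * (c1^(m+1)*2^m * (2/(μ*α)) * ((Q+P)^m * H)) := by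
      have := mul_nonneg hEm hH; positivity
    have hint2 : (0:ℝ) ≤ 2^m * (c1^(m+1)*2^m * (8^m * (2/μ)) * H) := by positivity
    have hint3 : (0:ℝ) ≤ 2^m * ((2/(μ*((p:ℝ)+1))) * H) := by positivity
    nlinarith [hint1, hint2, hint3]
  calc ((1/2) * y ^ 2 + (μ/2) * x * y + (μ^2/4) * x ^ 2
        + (α / ((p : ℝ) + 1)) * x ^ (p + 1)) ^ (m+1) = (Q + P) ^ (m+1) := by rw [hQdef, hPdef]
    _ ≤ _ := key.trans (le_of_eq (by ring))
end

section
/- Let p ≥ 3 be an odd natural number, μ > 0, α > 0, and let (x, y) be a C¹ solution on [0, ∞) of the system x' = y, y' = -α x^p - μ y. Define ℰ(t) := (1/2) y(t)² + (μ/2) x(t) y(t) + (μ²/4) x(t)² + (α/(p+1)) x(t)^{p+1}. Then there exists a constant ν > 0 such that ℰ'(t) + ν ℰ(t)^{(p+1)/2} / (1 + ℰ(t)^{(p-1)/2}) ≤ 0 for all t ≥ 0. -/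
open Set

lemma duffing_aux_two_pow (a b : ℝ) (ha : 0 ≤ a) (hb : 0 ≤ b) (n : ℕ) :
    (a + b) ^ n ≤ 2 ^ n * (a ^ n + b ^ n) := by
  rcases le_total a b with h | h
  · calc (a + b) ^ n ≤ (2 * b) ^ n := pow_le_pow_left₀ (by linarith) (by linarith) n
      _ = 2 ^ n * b ^ n := mul_pow 2 b n
      _ ≤ 2 ^ n * (a ^ n + b ^ n) := by
          have h1 : (0:ℝ) ≤ a ^ n := pow_nonneg ha n
          have h2 : (0:ℝ) ≤ (2:ℝ) ^ n := by positivity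
          linarith [mul_nonneg h2 h1]
  · calc (a + b) ^ n ≤ (2 * a) ^ n := pow_le_pow_left₀ (by linarith) (by linarith) n
      _ = 2 ^ n * a ^ n := mul_pow 2 a n
      _ ≤ 2 ^ n * (a ^ n + b ^ n) := by
          have h1 : (0:ℝ) ≤ b ^ n := pow_nonneg hb n
          have h2 : (0:ℝ) ≤ (2:ℝ) ^ n := by positivity
          linarith [mul_nonneg h2 h1]

lemma duffing_aux_key (μ α a : ℝ) (hμ : 0 < μ) (hα : 0 < α) (ha : 0 < a)
    (haα : a ≤ α) (m : ℕ) :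
    ∃ C : ℝ, 0 < C ∧ ∀ X Y E Pw : ℝ, Pw = (X ^ 2) ^ (m + 1) →
      E = (1/2) * Y ^ 2 + (μ/2) * X * Y + (μ^2/4) * X ^ 2 + a * Pw →
      E ^ (m + 1) ≤ C * (Y ^ 2 + α * Pw) * (1 + E ^ m) := by
  -- b absorbs the cross term
  obtain ⟨b, hb0, hbprop⟩ :
      ∃ b : ℝ, 0 < b ∧ ∀ X Y : ℝ, (μ/2) * X * Y + (μ^2/4) * X ^ 2
        ≤ (μ/4) * Y ^ 2 + b * X ^ 2 := by
    refine ⟨μ/4 + μ^2/4, by positivity, fun X Y => ?_⟩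
    linarith [mul_nonneg hμ.le (sq_nonneg (X - Y))]
  -- c₁
  obtain ⟨c₁, hc₁0, hc₁Y, hc₁P⟩ :
      ∃ c₁ : ℝ, 0 < c₁ ∧ 1/2 + μ/4 ≤ c₁ ∧ b + α ≤ c₁ * α := by
    have hba : (0:ℝ) ≤ (b + α)/α := by positivity
    refine ⟨(1/2 + μ/4) + (b + α)/α, by positivity, by linarith, ?_⟩
    have hcan : (b + α)/α * α = b + α := div_mul_cancel₀ _ hα.ne'
    nlinarith [mul_pos hμ hα, hα, hcan]
  -- M : threshold
  obtain ⟨M, hM1, hMb⟩ : ∃ M : ℝ, 1 ≤ M ∧ 2 * b ≤ M :=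
    ⟨max 1 (2 * b), le_max_left _ _, le_max_right _ _⟩
  have hM0 : (0:ℝ) < M := lt_of_lt_of_le one_pos hM1
  -- L : bound for Y^2 + Pw in the small-energy regime
  obtain ⟨L, hL0, hLprop⟩ :
      ∃ L : ℝ, 0 < L ∧ ∀ u : ℝ, 0 ≤ u → a * u ≤ M → 8 * M + u ≤ L := by
    refine ⟨8 * M + M / a, by positivity, fun u hu hau => ?_⟩
    have : u ≤ M / a := by rw [le_div_iff₀ ha]; nlinarith
    linarith
  -- K : coefficient bound
  obtain ⟨K, hK0, hKY, hKb, hKα⟩ :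
      ∃ K : ℝ, 0 < K ∧ 1/2 + μ/4 ≤ K ∧ b ≤ K ∧ α ≤ K :=
    ⟨(1/2 + μ/4) + b + α, by positivity, by linarith, by linarith, by linarith⟩
  obtain ⟨C1, hC10, hC1def⟩ :
      ∃ C1 : ℝ, 0 < C1 ∧ C1 = K ^ (m+1) * 2 ^ (m+1) * (L ^ m + 1) * (1 + 1/α) :=
    ⟨_, by positivity, rfl⟩
  refine ⟨C1 + 2 * c₁ + 1, by positivity, fun X Y E Pw hPw hE => ?_⟩
  have hPw0 : 0 ≤ Pw := hPw ▸ pow_nonneg (sq_nonneg X) _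
  have hquad : 0 ≤ (1/2) * Y ^ 2 + (μ/2) * X * Y + (μ^2/4) * X ^ 2 := by
    linarith [sq_nonneg (Y + μ * X), sq_nonneg Y]
  have haPw : 0 ≤ a * Pw := mul_nonneg ha.le hPw0
  have hE0 : 0 ≤ E := by rw [hE]; linarith
  have hαPw : 0 ≤ α * Pw := mul_nonneg hα.le hPw0
  have hD0 : 0 ≤ Y ^ 2 + α * Pw := by linarith [sq_nonneg Y]
  have hEm0 : 0 ≤ E ^ m := pow_nonneg hE0 m
  have hX2 : X ^ 2 ≤ Pw + 1 := by
    rcases le_total (X ^ 2) 1 with h | h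
    · linarith [hPw ▸ pow_nonneg (sq_nonneg X) (m+1)]
    · have := le_self_pow₀ h (Nat.succ_ne_zero m)
      rw [← hPw] at this; linarith
  have e1 := hbprop X Y
  have e3 : a * Pw ≤ α * Pw := mul_le_mul_of_nonneg_right haα hPw0
  have hEc : E ≤ c₁ * (Y ^ 2 + α * Pw) + b := by
    have e4 : (1/2 + μ/4) * Y ^ 2 ≤ c₁ * Y ^ 2 :=
      mul_le_mul_of_nonneg_right hc₁Y (sq_nonneg Y)
    have e5 : (b + α) * Pw ≤ c₁ * (α * Pw) := by
      calc (b + α) * Pw ≤ (c₁ * α) * Pw := mul_le_mul_of_nonneg_right hc₁P hPw0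
        _ = c₁ * (α * Pw) := by ring
    have e2 : b * X ^ 2 ≤ b * (Pw + 1) := mul_le_mul_of_nonneg_left hX2 hb0.le
    rw [hE]; linarith [e1, e2, e3, e4, e5]
  rcases le_total E M with hcase | hcase
  · -- small energy case
    have hY8 : Y ^ 2 ≤ 8 * E := by
      rw [hE]; linarith [sq_nonneg (3 * Y + 2 * μ * X), sq_nonneg (μ * X), haPw]
    have haPwM : a * Pw ≤ M := by
      have : a * Pw ≤ E := by rw [hE]; linarith
      linarith
    have hAL : Y ^ 2 + Pw ≤ L := by
      have := hLprop Pw hPw0 haPwM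
      linarith
    have hA0 : 0 ≤ Y ^ 2 + Pw := by positivity
    have hEK : E ≤ K * ((Y ^ 2 + Pw) + X ^ 2) := by
      have f1 : (1/2 + μ/4) * Y ^ 2 ≤ K * Y ^ 2 :=
        mul_le_mul_of_nonneg_right hKY (sq_nonneg Y)
      have f2 : b * X ^ 2 ≤ K * X ^ 2 :=
        mul_le_mul_of_nonneg_right hKb (sq_nonneg X)
      have f3 : α * Pw ≤ K * Pw := mul_le_mul_of_nonneg_right hKα hPw0
      rw [hE]; linarith [e1, e3, f1, f2, f3, haPw]
    have hLm : (0:ℝ) ≤ L ^ m := pow_nonneg hL0.le m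
    have h2p : (0:ℝ) ≤ (2:ℝ) ^ (m+1) := by positivity
    have hKp : (0:ℝ) ≤ K ^ (m+1) := by positivity
    have step1 : E ^ (m+1) ≤ K ^ (m+1) * ((Y ^ 2 + Pw) + X ^ 2) ^ (m+1) := by
      calc E ^ (m+1) ≤ (K * ((Y ^ 2 + Pw) + X ^ 2)) ^ (m+1) :=
            pow_le_pow_left₀ hE0 hEK _
        _ = K ^ (m+1) * ((Y ^ 2 + Pw) + X ^ 2) ^ (m+1) := mul_pow _ _ _
    have step3 : ((Y ^ 2 + Pw) + X ^ 2) ^ (m+1)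
        ≤ 2 ^ (m+1) * ((Y ^ 2 + Pw) ^ (m+1) + (X ^ 2) ^ (m+1)) :=
      duffing_aux_two_pow _ _ hA0 (sq_nonneg X) _
    have step5 : (Y ^ 2 + Pw) ^ (m+1) ≤ L ^ m * (Y ^ 2 + Pw) := by
      rw [pow_succ]
      exact mul_le_mul_of_nonneg_right (pow_le_pow_left₀ hA0 hAL m) hA0
    have step6 : (Y ^ 2 + Pw) ^ (m+1) + (X ^ 2) ^ (m+1) ≤ (L ^ m + 1) * (Y ^ 2 + Pw) := by
      rw [← hPw]
      have : (L ^ m + 1) * (Y ^ 2 + Pw) = L ^ m * (Y ^ 2 + Pw) + (Y ^ 2 + Pw) := by ring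
      linarith [step5, sq_nonneg Y]
    have step7 : E ^ (m+1) ≤ K ^ (m+1) * 2 ^ (m+1) * (L ^ m + 1) * (Y ^ 2 + Pw) := by
      calc E ^ (m+1) ≤ K ^ (m+1) * ((Y ^ 2 + Pw) + X ^ 2) ^ (m+1) := step1
        _ ≤ K ^ (m+1) * (2 ^ (m+1) * ((Y ^ 2 + Pw) ^ (m+1) + (X ^ 2) ^ (m+1))) :=
            mul_le_mul_of_nonneg_left step3 hKp
        _ ≤ K ^ (m+1) * (2 ^ (m+1) * ((L ^ m + 1) * (Y ^ 2 + Pw))) :=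
            mul_le_mul_of_nonneg_left (mul_le_mul_of_nonneg_left step6 h2p) hKp
        _ = K ^ (m+1) * 2 ^ (m+1) * (L ^ m + 1) * (Y ^ 2 + Pw) := by ring
    have step8 : Y ^ 2 + Pw ≤ (1 + 1/α) * (Y ^ 2 + α * Pw) := by
      have h1 : (0:ℝ) ≤ 1/α := by positivity
      have hcan : 1/α * α * Pw = Pw := by field_simp
      linarith [mul_nonneg h1 (sq_nonneg Y), hαPw, hcan]
    have hfin : E ^ (m+1) ≤ C1 * (Y ^ 2 + α * Pw) := by
      have hKL : (0:ℝ) ≤ K ^ (m+1) * 2 ^ (m+1) * (L ^ m + 1) := by positivity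
      calc E ^ (m+1) ≤ K ^ (m+1) * 2 ^ (m+1) * (L ^ m + 1) * (Y ^ 2 + Pw) := step7
        _ ≤ K ^ (m+1) * 2 ^ (m+1) * (L ^ m + 1) * ((1 + 1/α) * (Y ^ 2 + α * Pw)) :=
            mul_le_mul_of_nonneg_left step8 hKL
        _ = C1 * (Y ^ 2 + α * Pw) := by rw [hC1def]; ring
    linarith [mul_nonneg (mul_nonneg hC10.le hD0) hEm0,
      mul_nonneg (mul_nonneg hc₁0.le hD0) hEm0, mul_nonneg hD0 hEm0,
      mul_nonneg hc₁0.le hD0, hD0, hfin, mul_nonneg hC10.le hD0]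
  · -- large energy case
    have hbE : b ≤ E / 2 := by linarith
    have hE2c : E ≤ 2 * c₁ * (Y ^ 2 + α * Pw) := by linarith
    rw [pow_succ]
    have h1 : E ^ m * E ≤ E ^ m * (2 * c₁ * (Y ^ 2 + α * Pw)) :=
      mul_le_mul_of_nonneg_left hE2c hEm0
    linarith [mul_nonneg (mul_nonneg hC10.le hD0) hEm0,
      mul_nonneg (mul_nonneg hc₁0.le hD0) hEm0, mul_nonneg hD0 hEm0,
      mul_nonneg hC10.le hD0, mul_nonneg hc₁0.le hD0, hD0, h1]


/-- Differential inequality for the modified energy of a C¹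
solution of `x' = y, y' = -α x^p - μ y` with `μ > 0`: there is `ν > 0` such that
`ℰ'(t) + ν ℰ(t)^((p+1)/2) / (1 + ℰ(t)^((p-1)/2)) ≤ 0` for all `t ≥ 0`.
(Since `p` is odd, `(p+1)/2` and `(p-1)/2` are natural numbers.) -/
theorem duffing_modified_energy_differential_inequality
    (p : ℕ) (hp : 3 ≤ p) (hodd : Odd p)
    (μ α : ℝ) (hμ : 0 < μ) (hα : 0 < α)
    (x y : ℝ → ℝ)
    (hx : ∀ t ∈ Ici (0:ℝ), HasDerivWithinAt x (y t) (Ici 0) t)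
    (hy : ∀ t ∈ Ici (0:ℝ),
      HasDerivWithinAt y (-α * x t ^ p - μ * y t) (Ici 0) t) :
    ∃ ν : ℝ, 0 < ν ∧ ∀ t ∈ Ici (0:ℝ), ∃ d : ℝ,
      HasDerivWithinAt
        (fun s => (1/2) * y s ^ 2 + (μ/2) * x s * y s + (μ^2/4) * x s ^ 2
          + (α / ((p : ℝ) + 1)) * x s ^ (p + 1)) d (Ici 0) t ∧
      d + ν * ((1/2) * y t ^ 2 + (μ/2) * x t * y t + (μ^2/4) * x t ^ 2
            + (α / ((p : ℝ) + 1)) * x t ^ (p + 1)) ^ ((p + 1) / 2)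
          / (1 + ((1/2) * y t ^ 2 + (μ/2) * x t * y t + (μ^2/4) * x t ^ 2
            + (α / ((p : ℝ) + 1)) * x t ^ (p + 1)) ^ ((p - 1) / 2)) ≤ 0 := by
  obtain ⟨m, hm⟩ := hodd
  have hm' : p = 2 * m + 1 := by omega
  have hp1 : (0:ℝ) < (p : ℝ) + 1 := by positivity
  have ha : (0:ℝ) < α / ((p : ℝ) + 1) := by positivity
  have haα : α / ((p : ℝ) + 1) ≤ α := by
    rw [div_le_iff₀ hp1]
    nlinarith [Nat.cast_nonneg (α := ℝ) p, hα]
  obtain ⟨C, hC, hkey⟩ := duffing_aux_key μ α (α / ((p : ℝ) + 1)) hμ hα ha haα m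
  refine ⟨μ / (2 * C), by positivity, fun t ht => ?_⟩
  refine ⟨-(μ/2) * (y t ^ 2 + α * x t ^ (p + 1)), ?_, ?_⟩
  · -- derivative computation
    have hx' := hx t ht
    have hy' := hy t ht
    have H := (((((hy'.pow 2).const_mul ((1:ℝ)/2)).add
        ((hx'.mul hy').const_mul (μ/2))).add
        ((hx'.pow 2).const_mul (μ^2/4))).add
        ((hx'.pow (p + 1)).const_mul (α / ((p : ℝ) + 1))))
    convert H using 1
    · rfl
    · rfl
    · funext s; simp only [Pi.add_apply, Pi.mul_apply, Pi.pow_apply]; ring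
    · have hne : ((p : ℝ) + 1) ≠ 0 := ne_of_gt hp1
      simp only [Nat.add_sub_cancel]
      push_cast
      field_simp
      ring
  · -- the differential inequality
    rw [show (p + 1) / 2 = m + 1 by omega, show (p - 1) / 2 = m by omega]
    have hPw : x t ^ (p + 1) = (x t ^ 2) ^ (m + 1) := by
      rw [show p + 1 = 2 * (m + 1) by omega, pow_mul]
    have hkey' := hkey (x t) (y t)
      ((1/2) * y t ^ 2 + (μ/2) * x t * y t + (μ^2/4) * x t ^ 2
        + (α / ((p : ℝ) + 1)) * x t ^ (p + 1)) (x t ^ (p + 1)) hPw rfl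
    set E : ℝ := (1/2) * y t ^ 2 + (μ/2) * x t * y t + (μ^2/4) * x t ^ 2
        + (α / ((p : ℝ) + 1)) * x t ^ (p + 1) with hE
    have hPw0 : 0 ≤ x t ^ (p + 1) := hPw ▸ pow_nonneg (sq_nonneg _) _
    have hE0 : 0 ≤ E := by
      rw [hE]
      have h1 : 0 ≤ (α / ((p : ℝ) + 1)) * x t ^ (p + 1) := mul_nonneg ha.le hPw0
      linarith [sq_nonneg (y t + μ * x t), sq_nonneg (y t)]
    have hEm0 : (0:ℝ) ≤ E ^ m := pow_nonneg hE0 m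
    have h1E : (0:ℝ) < 1 + E ^ m := by linarith
    have hdiv : μ / (2 * C) * E ^ (m + 1) / (1 + E ^ m)
        ≤ (μ/2) * (y t ^ 2 + α * x t ^ (p + 1)) := by
      rw [div_le_iff₀ h1E]
      have hstep : μ / (2 * C) * E ^ (m + 1)
          ≤ μ / (2 * C) * (C * (y t ^ 2 + α * x t ^ (p + 1)) * (1 + E ^ m)) :=
        mul_le_mul_of_nonneg_left hkey' (by positivity)
      have hcan : μ / (2 * C) * (C * (y t ^ 2 + α * x t ^ (p + 1)) * (1 + E ^ m))
          = (μ/2) * (y t ^ 2 + α * x t ^ (p + 1)) * (1 + E ^ m) := by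
        field_simp
      linarith [hstep, hcan.ge, hcan.le]
    linarith [hdiv]
end

section
/- Let p ≥ 3 be an odd natural number and ν > 0. Suppose ℰ : [0, ∞) → (0, ∞) is a differentiable function satisfying ℰ'(t) + ν ℰ(t)^{(p+1)/2} / (1 + ℰ(t)^{(p-1)/2}) ≤ 0 for all t ≥ 0. Then the function t ↦ exp(ν t - (2/(p-1)) ℰ(t)^{-(p-1)/2}) ℰ(t) is nonincreasing on [0, ∞). -/
open Set

/-- If a positive differentiable function `ℰ` on `[0, ∞)`
satisfies the differential inequality
`ℰ'(t) + ν ℰ(t)^((p+1)/2) / (1 + ℰ(t)^((p-1)/2)) ≤ 0`, then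
`t ↦ exp(ν t - (2/(p-1)) ℰ(t)^(-(p-1)/2)) ℰ(t)` is nonincreasing on `[0, ∞)`.
(Since `p` is odd, `(p+1)/2` and `(p-1)/2` are natural numbers, and
`ℰ(t)^(-(p-1)/2)` is written as the inverse of `ℰ(t)^((p-1)/2)`.) -/
theorem differential_inequality_weighted_monotone
    (p : ℕ) (hp : 3 ≤ p) (hodd : Odd p)
    (ν : ℝ) (hν : 0 < ν)
    (E E' : ℝ → ℝ)
    (hpos : ∀ t ∈ Ici (0:ℝ), 0 < E t)
    (hderiv : ∀ t ∈ Ici (0:ℝ), HasDerivWithinAt E (E' t) (Ici 0) t)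
    (hineq : ∀ t ∈ Ici (0:ℝ),
      E' t + ν * E t ^ ((p + 1) / 2) / (1 + E t ^ ((p - 1) / 2)) ≤ 0) :
    AntitoneOn
      (fun t => Real.exp (ν * t - (2 / ((p : ℝ) - 1)) * (E t ^ ((p - 1) / 2))⁻¹)
        * E t) (Ici 0) := by
  obtain ⟨m, hm⟩ := hodd
  have hm1 : 1 ≤ m := by omega
  have hk : (p - 1) / 2 = m := by omega
  have hk1 : (p + 1) / 2 = m + 1 := by omega
  have hpr : (p : ℝ) - 1 = 2 * m := by
    have : (p:ℝ) = 2 * m + 1 := by exact_mod_cast congrArg Nat.cast hm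
    linarith
  rw [hk]
  set c : ℝ := 2 / ((p : ℝ) - 1) with hc
  have hcm : c * m = 1 := by
    rw [hc, hpr]
    have hm0 : (0:ℝ) < (m:ℝ) := by exact_mod_cast hm1
    field_simp
  have hint : interior (Ici (0:ℝ)) = Ioi 0 := interior_Ici
  apply antitoneOn_of_hasDerivWithinAt_nonpos (convex_Ici 0)
    (f' := fun x => Real.exp (ν * x - c * (E x ^ m)⁻¹) *
      (ν * E x + E' x * (1 + (E x ^ m)⁻¹)))
  · -- continuity
    apply ContinuousOn.mul
    · apply Real.continuous_exp.comp_continuousOn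
      apply ContinuousOn.sub (continuousOn_const.mul continuousOn_id)
      apply ContinuousOn.mul continuousOn_const
      apply ContinuousOn.inv₀
      · exact ContinuousOn.pow (fun t ht => (hderiv t ht).continuousWithinAt) m
      · intro t ht
        exact pow_ne_zero m (hpos t ht).ne'
    · exact fun t ht => (hderiv t ht).continuousWithinAt
  · -- derivative
    rw [hint]
    intro x hx
    have hx' : x ∈ Ici (0:ℝ) := mem_Ici.mpr (le_of_lt (mem_Ioi.mp hx))
    have hE := (hderiv x hx').mono (Ioi_subset_Ici le_rfl)
    have hEx : 0 < E x := hpos x hx'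
    have hExm : (0:ℝ) < E x ^ m := pow_pos hEx m
    have hpow : HasDerivWithinAt (fun y => E y ^ m)
        ((m : ℝ) * E x ^ (m - 1) * E' x) (Ioi 0) x := hE.pow m
    have hinv : HasDerivWithinAt (fun y => (E y ^ m)⁻¹)
        (-((m : ℝ) * E x ^ (m - 1) * E' x) / (E x ^ m) ^ 2) (Ioi 0) x :=
      hpow.inv hExm.ne'
    have hg : HasDerivWithinAt (fun y => ν * y - c * (E y ^ m)⁻¹)
        (ν - c * (-((m : ℝ) * E x ^ (m - 1) * E' x) / (E x ^ m) ^ 2)) (Ioi 0) x := by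
      have := ((hasDerivWithinAt_id x (Ioi 0)).const_mul ν).sub (hinv.const_mul c)
      simp at this
      exact this
    have hF : HasDerivWithinAt
        (fun y => Real.exp (ν * y - c * (E y ^ m)⁻¹) * E y)
        (Real.exp (ν * x - c * (E x ^ m)⁻¹) *
          (ν - c * (-((m : ℝ) * E x ^ (m - 1) * E' x) / (E x ^ m) ^ 2)) * E x
        + Real.exp (ν * x - c * (E x ^ m)⁻¹) * E' x) (Ioi 0) x :=
      ((Real.hasDerivAt_exp _).comp_hasDerivWithinAt x hg).mul hE
    convert hF using 1
    have hEm1 : E x ^ (m - 1) * E x = E x ^ m := by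
      rw [← pow_succ]
      congr 1
      omega
    have hEne : E x ≠ 0 := hEx.ne'
    have hCne : E x ^ m ≠ 0 := hExm.ne'
    have hscal : c * ((m : ℝ) * E x ^ (m - 1) * E' x / (E x ^ m) ^ 2)
        = E' x / (E x ^ m * E x) := by
      have hpne : (p:ℝ) - 1 ≠ 0 := by
        rw [hpr]; positivity
      rw [hc]
      field_simp
      linear_combination (2 * (m:ℝ) * E' x) * hEm1
        - (E' x * E x ^ m) * hpr
    rw [neg_div, mul_neg, sub_neg_eq_add, hscal]
    field_simp
    ring
  · -- nonpositivity
    rw [hint]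
    intro x hx
    have hx' : x ∈ Ici (0:ℝ) := mem_Ici.mpr (le_of_lt (mem_Ioi.mp hx))
    have hEx : 0 < E x := hpos x hx'
    have hExm : (0:ℝ) < E x ^ m := pow_pos hEx m
    have h := hineq x hx'
    rw [hk, hk1] at h
    have h1 : 0 < 1 + E x ^ m := by linarith
    have h2 : E' x * (1 + E x ^ m) ≤ -(ν * E x ^ (m + 1)) := by
      have := (div_le_iff₀ h1).mp (by linarith : ν * E x ^ (m+1) / (1 + E x ^ m) ≤ -E' x)
      nlinarith
    apply mul_nonpos_of_nonneg_of_nonpos (Real.exp_pos _).le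
    have key : (ν * E x + E' x * (1 + (E x ^ m)⁻¹)) * E x ^ m ≤ 0 := by
      have hp1 : E x ^ (m+1) = E x ^ m * E x := pow_succ _ _
      rw [hp1] at h2
      have hexp : (ν * E x + E' x * (1 + (E x ^ m)⁻¹)) * E x ^ m
          = ν * E x * E x ^ m + E' x * E x ^ m + E' x := by
        field_simp
        ring
      rw [hexp]
      nlinarith [h2]
    by_contra hcon
    push_neg at hcon
    nlinarith [mul_pos hcon hExm]
end

section
/- Let p ≥ 3 be an odd natural number and ν > 0. Suppose ℰ : [0, ∞) → (0, ∞) is a differentiable function satisfying ℰ'(t) + ν ℰ(t)^{(p+1)/2} / (1 + ℰ(t)^{(p-1)/2}) ≤ 0 for all t ≥ 0. Then there exists a constant C† > 0 (depending on p, ν and ℰ(0)) such that ℰ(t) ≤ C† t^{-2/(p-1)} for all t > 0. -/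
open Set

/-- If a positive differentiable function `ℰ` on `[0, ∞)`
satisfies `ℰ'(t) + ν ℰ(t)^((p+1)/2) / (1 + ℰ(t)^((p-1)/2)) ≤ 0` for `t ≥ 0`,
then there is `C† > 0` such that `ℰ(t) ≤ C† t^(-2/(p-1))` for all `t > 0`.
(Since `p` is odd, `(p+1)/2` and `(p-1)/2` are natural numbers.) -/
theorem differential_inequality_decay
    (p : ℕ) (hp : 3 ≤ p) (hodd : Odd p)
    (ν : ℝ) (hν : 0 < ν)
    (E E' : ℝ → ℝ)
    (hpos : ∀ t ∈ Ici (0:ℝ), 0 < E t)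
    (hderiv : ∀ t ∈ Ici (0:ℝ), HasDerivWithinAt E (E' t) (Ici 0) t)
    (hineq : ∀ t ∈ Ici (0:ℝ),
      E' t + ν * E t ^ ((p + 1) / 2) / (1 + E t ^ ((p - 1) / 2)) ≤ 0) :
    ∃ C : ℝ, 0 < C ∧ ∀ t : ℝ, 0 < t →
      E t ≤ C * t ^ (-(2 / ((p : ℝ) - 1))) := by
  obtain ⟨k, hk⟩ := hodd
  have hk1 : 1 ≤ k := by omega
  have hkR : (0:ℝ) < (k:ℝ) := by exact_mod_cast hk1
  have hpm : (p - 1) / 2 = k := by omega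
  have hpp : (p + 1) / 2 = k + 1 := by omega
  rw [hpm, hpp] at hineq
  -- E' ≤ strictly negative bound on Ici 0
  have hE'neg : ∀ t ∈ Ici (0:ℝ), E' t ≤ -(ν * E t ^ (k+1) / (1 + E t ^ k)) := by
    intro t ht
    have h1 := hineq t ht
    linarith
  have hden : ∀ t ∈ Ici (0:ℝ), (0:ℝ) < 1 + E t ^ k := by
    intro t ht
    have := hpos t ht
    positivity
  have hE'le : ∀ t ∈ Ici (0:ℝ), E' t ≤ 0 := by
    intro t ht
    have h1 := hE'neg t ht
    have h2 : 0 < ν * E t ^ (k+1) / (1 + E t ^ k) :=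
      div_pos (mul_pos hν (pow_pos (hpos t ht) _)) (hden t ht)
    linarith
  have hcont : ContinuousOn E (Ici 0) := fun t ht => (hderiv t ht).continuousWithinAt
  -- E is antitone on Ici 0
  have hanti : AntitoneOn E (Ici 0) := by
    apply antitoneOn_of_hasDerivWithinAt_nonpos (convex_Ici 0) hcont
    · intro x hx
      rw [interior_Ici] at hx ⊢
      exact (hderiv x (Ioi_subset_Ici_self hx)).mono Ioi_subset_Ici_self
    · intro x hx
      rw [interior_Ici] at hx
      exact hE'le x (Ioi_subset_Ici_self hx)
  have hE0 : ∀ t ∈ Ici (0:ℝ), E t ≤ E 0 := fun t ht => hanti self_mem_Ici ht ht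
  set c : ℝ := ν / (1 + E 0 ^ k) with hc
  have hE00 : 0 < E 0 := hpos 0 self_mem_Ici
  have hcpos : 0 < c := div_pos hν (by positivity)
  -- key derivative bound
  have hkey : ∀ t ∈ Ici (0:ℝ),
      (k:ℝ) * c ≤ -((k:ℝ) * E t ^ (k-1) * E' t) / (E t ^ k) ^ 2 := by
    intro t ht
    have hE := hpos t ht
    have hEk1 : (0:ℝ) < E t ^ (k+1) := pow_pos hE _
    have h1 : ν * E t ^ (k+1) / (1 + E t ^ k) ≤ -E' t := by
      have := hE'neg t ht; linarith
    have h2 : c * E t ^ (k+1) ≤ ν * E t ^ (k+1) / (1 + E t ^ k) := by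
      rw [hc, div_mul_eq_mul_div, div_le_div_iff₀ (by positivity) (hden t ht)]
      have h3 : E t ^ k ≤ E 0 ^ k := pow_le_pow_left₀ (le_of_lt hE) (hE0 t ht) k
      nlinarith [mul_pos hν hEk1]
    have h4 : c * E t ^ (k+1) ≤ -E' t := le_trans h2 h1
    rw [le_div_iff₀ (by positivity)]
    have hpow : E t ^ (k-1) * E t ^ (k+1) = (E t ^ k) ^ 2 := by
      rw [← pow_add, ← pow_mul]
      congr 1
      omega
    calc (k:ℝ) * c * (E t ^ k) ^ 2 = (k:ℝ) * E t ^ (k-1) * (c * E t ^ (k+1)) := by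
          rw [← hpow]; ring
      _ ≤ (k:ℝ) * E t ^ (k-1) * (-E' t) := by
          apply mul_le_mul_of_nonneg_left h4
          positivity
      _ = -((k:ℝ) * E t ^ (k-1) * E' t) := by ring
  -- the auxiliary function H
  set H : ℝ → ℝ := fun t => (E t ^ k)⁻¹ - (k:ℝ) * c * t with hH
  have hHderiv : ∀ t ∈ Ici (0:ℝ), HasDerivWithinAt H
      (-((k:ℝ) * E t ^ (k-1) * E' t) / (E t ^ k) ^ 2 - (k:ℝ) * c * 1) (Ici 0) t := by
    intro t ht
    exact (((hderiv t ht).pow k).inv (pow_ne_zero k (hpos t ht).ne')).sub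
      ((hasDerivWithinAt_id t (Ici 0)).const_mul ((k:ℝ) * c))
  have hHmono : MonotoneOn H (Ici 0) := by
    apply monotoneOn_of_hasDerivWithinAt_nonneg (convex_Ici 0)
      (f' := fun t => -((k:ℝ) * E t ^ (k-1) * E' t) / (E t ^ k) ^ 2 - (k:ℝ) * c * 1)
    · exact fun t ht => (hHderiv t ht).continuousWithinAt
    · intro x hx
      rw [interior_Ici] at hx ⊢
      exact (hHderiv x (Ioi_subset_Ici_self hx)).mono Ioi_subset_Ici_self
    · intro x hx
      rw [interior_Ici] at hx
      have := hkey x (Ioi_subset_Ici_self hx)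
      linarith
  -- conclude the power bound
  refine ⟨((k:ℝ) * c) ^ (-(1/(k:ℝ))), Real.rpow_pos_of_pos (by positivity) _, ?_⟩
  intro t ht
  have ht' : t ∈ Ici (0:ℝ) := le_of_lt ht
  have hHt : H 0 ≤ H t := hHmono self_mem_Ici ht' ht'
  have hEt := hpos t ht'
  have hinv : ((k:ℝ) * c) * t ≤ (E t ^ k)⁻¹ := by
    have h0 : (0:ℝ) < (E 0 ^ k)⁻¹ := by positivity
    simp only [hH, mul_zero, sub_zero] at hHt
    linarith
  have hbound : E t ^ k ≤ (((k:ℝ) * c) * t)⁻¹ := by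
    rw [le_inv_comm₀ (by positivity) (by positivity)]
    exact hinv
  -- convert to rpow
  have hexp : -(2 / ((p : ℝ) - 1)) = -(1/(k:ℝ)) := by
    have : (p:ℝ) = 2 * k + 1 := by exact_mod_cast hk
    rw [this]
    field_simp
    ring
  rw [hexp]
  have hrpow : E t = (E t ^ k) ^ (1/(k:ℝ)) := by
    rw [← Real.rpow_natCast (E t) k, ← Real.rpow_mul (le_of_lt hEt)]
    rw [mul_one_div, div_self (ne_of_gt hkR), Real.rpow_one]
  rw [hrpow]
  calc (E t ^ k) ^ (1/(k:ℝ)) ≤ ((((k:ℝ) * c) * t)⁻¹) ^ (1/(k:ℝ)) :=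
        Real.rpow_le_rpow (by positivity) hbound (by positivity)
    _ = (((k:ℝ) * c) * t) ^ (-(1/(k:ℝ))) := by
        rw [Real.inv_rpow (by positivity), ← Real.rpow_neg (by positivity)]
    _ = ((k:ℝ) * c) ^ (-(1/(k:ℝ))) * t ^ (-(1/(k:ℝ))) := by
        rw [Real.mul_rpow (by positivity) (le_of_lt ht)]
end

section
/- Let p ≥ 3 be an odd natural number, μ > 0, α > 0, and let (x, y) be a C¹ solution on [0, ∞) of the system x' = y, y' = -α x^p - μ y. Define ℰ(t) := (1/2) y(t)² + (μ/2) x(t) y(t) + (μ²/4) x(t)² + (α/(p+1)) x(t)^{p+1}. Then there exists a constant C† > 0 such that ℰ(t) ≤ C† t^{-2/(p-1)} for all t > 0. -/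
open Set

private noncomputable def Efun (p : ℕ) (μ α : ℝ) (x y : ℝ → ℝ) : ℝ → ℝ :=
  fun t => (1/2) * y t ^ 2 + (μ/2) * x t * y t + (μ^2/4) * x t ^ 2
    + (α / ((p : ℝ) + 1)) * x t ^ (p + 1)

private lemma aux_add_pow_le {a b : ℝ} (ha : 0 ≤ a) (hb : 0 ≤ b) (n : ℕ) :
    (a + b) ^ n ≤ 2 ^ n * (a ^ n + b ^ n) := by
  have hmax : 0 ≤ max a b := le_trans ha (le_max_left a b)
  have h1 : a + b ≤ 2 * max a b := by
    rcases max_cases a b with ⟨h, h'⟩ | ⟨h, h'⟩ <;> rw [h] <;> linarith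
  calc (a + b) ^ n ≤ (2 * max a b) ^ n :=
        pow_le_pow_left₀ (by linarith) h1 n
    _ = 2 ^ n * (max a b) ^ n := mul_pow 2 _ n
    _ ≤ 2 ^ n * (a ^ n + b ^ n) := by
        apply mul_le_mul_of_nonneg_left _ (by positivity)
        rcases max_cases a b with ⟨h, _⟩ | ⟨h, _⟩ <;> rw [h]
        · nlinarith [pow_nonneg hb n]
        · nlinarith [pow_nonneg ha n]

private lemma aux_add_pow_le3 {a b c : ℝ} (ha : 0 ≤ a) (hb : 0 ≤ b) (hc : 0 ≤ c) (n : ℕ) :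
    (a + b + c) ^ n ≤ 4 ^ n * (a ^ n + b ^ n + c ^ n) := by
  have e1 := aux_add_pow_le (add_nonneg ha hb) hc n
  have e2 := aux_add_pow_le ha hb n
  have h2n : (0:ℝ) < 2 ^ n := by positivity
  have h12 : (1:ℝ) ≤ 2 ^ n := one_le_pow₀ (by norm_num)
  have hA := pow_nonneg ha n
  have hB := pow_nonneg hb n
  have hC := pow_nonneg hc n
  have h4eq : (4:ℝ) ^ n = 2 ^ n * 2 ^ n := by rw [← mul_pow]; norm_num
  calc (a + b + c) ^ n ≤ 2 ^ n * ((a + b) ^ n + c ^ n) := e1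
    _ ≤ 2 ^ n * ((2 ^ n * (a ^ n + b ^ n)) + c ^ n) := by
        apply mul_le_mul_of_nonneg_left _ h2n.le
        linarith
    _ ≤ 4 ^ n * (a ^ n + b ^ n + c ^ n) := by
        rw [h4eq]
        have hc' : c ^ n ≤ 2 ^ n * c ^ n := le_mul_of_one_le_left hC h12
        have hint : (0:ℝ) ≤ 2 ^ n * (2 ^ n * c ^ n - c ^ n) :=
          mul_nonneg h2n.le (sub_nonneg.mpr hc')
        nlinarith [hint]

set_option maxHeartbeats 2000000 in
private lemma duffing_aux (p m : ℕ) (hm : p = 2 * m + 1) (hm1 : 1 ≤ m)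
    (μ α : ℝ) (hμ : 0 < μ) (hα : 0 < α)
    (x y : ℝ → ℝ)
    (hx : ∀ t ∈ Ici (0:ℝ), HasDerivWithinAt x (y t) (Ici 0) t)
    (hy : ∀ t ∈ Ici (0:ℝ),
      HasDerivWithinAt y (-α * x t ^ p - μ * y t) (Ici 0) t) :
    ∃ C : ℝ, 0 < C ∧ ∀ t : ℝ, 0 < t →
      Efun p μ α x y t ≤ C * t ^ (-(2 / ((p : ℝ) - 1))) := by
  set E : ℝ → ℝ := Efun p μ α x y with hEdef
  have hpc : (0:ℝ) < (p:ℝ) + 1 := by positivity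
  have hEven : Even (p + 1) := ⟨m + 1, by omega⟩
  have hXP : ∀ s : ℝ, 0 ≤ x s ^ (p + 1) := fun s => hEven.pow_nonneg _
  have cnn : (0:ℝ) ≤ α / ((p:ℝ) + 1) := div_nonneg hα.le hpc.le
  -- derivative of E
  have hE' : ∀ s ∈ Ici (0:ℝ), HasDerivWithinAt E
      (-(μ/2) * y s ^ 2 - (α*μ/2) * x s ^ (p+1)) (Ici 0) s := by
    intro s hs
    have H := ((((hy s hs).pow 2).const_mul ((1:ℝ)/2)).add
        (((hx s hs).mul (hy s hs)).const_mul (μ/2))).add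
        ((((hx s hs).pow 2).const_mul (μ^2/4)).add
          (((hx s hs).pow (p+1)).const_mul (α/((p:ℝ)+1))))
    rw [hEdef]
    unfold Efun
    convert H using 1
    · ext u; ring
    · ext u; simp only [Pi.add_apply, Pi.mul_apply, Pi.pow_apply]
    · ext u; simp only [Pi.add_apply, Pi.mul_apply, Pi.pow_apply]; ring
    · norm_num
      field_simp
      ring
  -- nonnegativity and pointwise bounds
  have hEexp : ∀ s : ℝ, E s = (1/2) * y s ^ 2 + (μ/2) * x s * y s + (μ^2/4) * x s ^ 2
      + (α / ((p : ℝ) + 1)) * x s ^ (p + 1) := fun s => rfl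
  have hEnn : ∀ s : ℝ, 0 ≤ E s := by
    intro s
    rw [hEexp s]
    nlinarith [sq_nonneg (2 * y s + μ * x s), sq_nonneg (μ * x s),
      mul_nonneg cnn (hXP s)]
  have hY : ∀ s : ℝ, y s ^ 2 ≤ 8 * E s := by
    intro s
    rw [hEexp s]
    nlinarith [sq_nonneg (2 * y s + 2 * μ * x s), mul_nonneg cnn (hXP s)]
  have hXPb : ∀ s : ℝ, α * x s ^ (p+1) ≤ ((p:ℝ)+1) * E s := by
    intro s
    have h1 : (α/((p:ℝ)+1)) * x s ^ (p+1) ≤ E s := by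
      rw [hEexp s]
      nlinarith [sq_nonneg (2 * y s + μ * x s), sq_nonneg (μ * x s)]
    have h2 := mul_le_mul_of_nonneg_left h1 hpc.le
    have heq : ((p:ℝ)+1) * ((α/((p:ℝ)+1)) * x s ^ (p+1)) = α * x s ^ (p+1) := by
      field_simp
    rw [heq] at h2
    exact h2
  -- continuity / antitone
  have contE : ContinuousOn E (Ici 0) := fun s hs => (hE' s hs).continuousWithinAt
  have hanti : AntitoneOn E (Ici 0) := by
    apply antitoneOn_of_hasDerivWithinAt_nonpos (convex_Ici 0) contE
      (f' := fun s => -(μ/2) * y s ^ 2 - (α*μ/2) * x s ^ (p+1))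
    · intro s hs
      exact (hE' s (interior_subset hs)).mono interior_subset
    · intro s hs
      nlinarith [sq_nonneg (y s), hXP s, mul_nonneg (mul_nonneg hα.le hμ.le) (hXP s)]
  have hEle : ∀ s ∈ Ici (0:ℝ), E s ≤ E 0 := fun s hs => hanti self_mem_Ici hs hs
  obtain ⟨M, hM1, hMle⟩ : ∃ M : ℝ, 1 ≤ M ∧ ∀ s ∈ Ici (0:ℝ), E s ≤ M :=
    ⟨E 0 + 1, by linarith [hEnn 0], fun s hs => by linarith [hEle s hs]⟩
  have hM : (0:ℝ) < M := by linarith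
  obtain ⟨A, hA, hAbd⟩ : ∃ A : ℝ, 0 < A ∧
      ∀ s : ℝ, E s ≤ A * (y s ^ 2 + x s ^ 2 + x s ^ (p+1)) := by
    refine ⟨1 + μ + μ^2 + α, by positivity, fun s => ?_⟩
    have hdivle : α / ((p:ℝ)+1) ≤ α :=
      div_le_self hα.le (by linarith [Nat.cast_nonneg (α := ℝ) p])
    have h4 := mul_le_mul_of_nonneg_right hdivle (hXP s)
    rw [hEexp s]
    nlinarith [sq_nonneg (y s), sq_nonneg (x s),
      mul_nonneg hμ.le (sq_nonneg (x s - y s)),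
      mul_nonneg hμ.le (sq_nonneg (x s)), mul_nonneg hμ.le (sq_nonneg (y s)),
      mul_nonneg (mul_nonneg hμ.le hμ.le) (sq_nonneg (x s)),
      mul_nonneg hα.le (hXP s), hXP s]
  obtain ⟨K, hK, hKbd⟩ : ∃ K : ℝ, 0 < K ∧
      ∀ s ∈ Ici (0:ℝ), E s ^ (m+1) ≤ K * (y s ^ 2 + x s ^ (p+1)) := by
    refine ⟨A^(m+1) * 4^(m+1) * ((8*M)^m + 1 + (((p:ℝ)+1)*M/α)^m), ?_, ?_⟩
    · have h8 : (0:ℝ) < (8*M)^m := pow_pos (by linarith) m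
      have hD : (0:ℝ) < (((p:ℝ)+1)*M/α)^m :=
        pow_pos (div_pos (mul_pos hpc hM) hα) m
      have h4 : (0:ℝ) < (4:ℝ)^(m+1) := by positivity
      have hAp : (0:ℝ) < A^(m+1) := pow_pos hA _
      have := mul_pos (mul_pos hAp h4)
        (by linarith : (0:ℝ) < (8*M)^m + 1 + (((p:ℝ)+1)*M/α)^m)
      linarith
    · intro s hs
      have hYnn : (0:ℝ) ≤ y s ^ 2 := sq_nonneg _
      have hX2nn : (0:ℝ) ≤ x s ^ 2 := sq_nonneg _
      have hXPnn := hXP s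
      have hsM := hMle s hs
      have hYle : y s ^ 2 ≤ 8 * M := by linarith [hY s]
      have hXPle : x s ^ (p+1) ≤ ((p:ℝ)+1) * M / α := by
        rw [le_div_iff₀ hα]
        have h1 := hXPb s
        have h2 : ((p:ℝ)+1) * E s ≤ ((p:ℝ)+1) * M := mul_le_mul_of_nonneg_left hsM hpc.le
        linarith
      have h5 : (y s ^ 2) ^ (m+1) ≤ (8*M)^m * y s ^ 2 := by
        rw [pow_succ]
        exact mul_le_mul_of_nonneg_right (pow_le_pow_left₀ hYnn hYle m) hYnn
      have h6 : (x s ^ 2) ^ (m+1) = x s ^ (p+1) := by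
        rw [← pow_mul]; congr 1; omega
      have h7 : (x s ^ (p+1)) ^ (m+1) ≤ (((p:ℝ)+1)*M/α)^m * x s ^ (p+1) := by
        rw [pow_succ]
        exact mul_le_mul_of_nonneg_right (pow_le_pow_left₀ hXPnn hXPle m) hXPnn
      have hbd : (y s ^ 2 + x s ^ 2 + x s ^ (p+1)) ^ (m+1)
          ≤ 4^(m+1) * ((y s ^ 2)^(m+1) + (x s ^ 2)^(m+1) + (x s ^ (p+1))^(m+1)) :=
        aux_add_pow_le3 hYnn hX2nn hXPnn (m+1)
      have h8nn : (0:ℝ) ≤ (8*M)^m := pow_nonneg (by linarith) m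
      have hDnn : (0:ℝ) ≤ (((p:ℝ)+1)*M/α)^m :=
        pow_nonneg (div_nonneg (mul_nonneg hpc.le hM.le) hα.le) m
      calc E s ^ (m+1) ≤ (A * (y s ^2 + x s^2 + x s^(p+1)))^(m+1) :=
            pow_le_pow_left₀ (hEnn s) (hAbd s) (m+1)
        _ = A^(m+1) * (y s ^2 + x s^2 + x s^(p+1))^(m+1) := mul_pow _ _ _
        _ ≤ A^(m+1) * (4^(m+1) * ((y s ^ 2)^(m+1) + (x s ^ 2)^(m+1) + (x s ^ (p+1))^(m+1))) :=
            mul_le_mul_of_nonneg_left hbd (pow_nonneg hA.le _)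
        _ = A^(m+1) * 4^(m+1) * ((y s ^ 2)^(m+1) + (x s ^ 2)^(m+1) + (x s ^ (p+1))^(m+1)) := by
            ring
        _ ≤ A^(m+1) * 4^(m+1) * ((8*M)^m * y s ^ 2 + x s ^(p+1) + (((p:ℝ)+1)*M/α)^m * x s ^ (p+1)) := by
            apply mul_le_mul_of_nonneg_left _
              (mul_nonneg (pow_nonneg hA.le _) (by positivity))
            rw [h6]; linarith
        _ ≤ A^(m+1) * 4^(m+1) * ((8*M)^m + 1 + (((p:ℝ)+1)*M/α)^m) * (y s ^2 + x s ^(p+1)) := by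
            rw [mul_assoc (A^(m+1) * 4^(m+1))]
            apply mul_le_mul_of_nonneg_left _
              (mul_nonneg (pow_nonneg hA.le _) (by positivity))
            nlinarith [mul_nonneg h8nn hXPnn, mul_nonneg hDnn hYnn]
  set c : ℝ := min (μ/2) (α*μ/2) with hcdef
  have hc : 0 < c := lt_min (by linarith) (by positivity)
  set κ : ℝ := c / K with hκdef
  have hκ : 0 < κ := div_pos hc hK
  have hmR : (0:ℝ) < (m:ℝ) := by exact_mod_cast Nat.lt_of_lt_of_le Nat.zero_lt_one hm1
  have hdiff : ∀ s ∈ Ici (0:ℝ),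
      -(μ/2) * y s ^ 2 - (α*μ/2) * x s ^ (p+1) ≤ -(κ * E s ^ (m+1)) := by
    intro s hs
    have h1 : κ * E s ^ (m+1) ≤ κ * (K * (y s ^2 + x s ^(p+1))) :=
      mul_le_mul_of_nonneg_left (hKbd s hs) hκ.le
    have hKc : κ * K = c := by rw [hκdef]; exact div_mul_cancel₀ c hK.ne'
    have h2 : κ * (K * (y s ^2 + x s ^(p+1))) = c * (y s^2 + x s^(p+1)) := by
      rw [← mul_assoc, hKc]
    have hl := mul_le_mul_of_nonneg_right (min_le_left (μ/2) (α*μ/2)) (sq_nonneg (y s))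
    have hr := mul_le_mul_of_nonneg_right (min_le_right (μ/2) (α*μ/2)) (hXP s)
    rw [h2] at h1
    nlinarith [hl, hr]
  refine ⟨(((m:ℝ) * κ)⁻¹) ^ ((1:ℝ)/(m:ℝ)), Real.rpow_pos_of_pos (inv_pos.2 (mul_pos hmR hκ)) _, ?_⟩
  intro t ht
  have hexp : -(2 / ((p:ℝ) - 1)) = -(1/(m:ℝ)) := by
    have hpl : ((p:ℝ) - 1) = 2 * (m:ℝ) := by subst hm; push_cast; ring
    have hmne : (m:ℝ) ≠ 0 := ne_of_gt hmR
    rw [hpl, show (2:ℝ)/(2*(m:ℝ)) = 1/(m:ℝ) by field_simp]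
  rw [hexp]
  have hC : (0:ℝ) < (((m:ℝ) * κ)⁻¹) ^ ((1:ℝ)/(m:ℝ)) :=
    Real.rpow_pos_of_pos (inv_pos.2 (mul_pos hmR hκ)) _
  rcases eq_or_lt_of_le (hEnn t) with h0 | hEt
  · rw [← h0]
    exact le_of_lt (mul_pos hC (Real.rpow_pos_of_pos ht _))
  · have hEpos : ∀ s ∈ Icc (0:ℝ) t, 0 < E s := fun s hs =>
      lt_of_lt_of_le hEt (hanti (mem_Ici.mpr hs.1) (mem_Ici.mpr (le_trans hs.1 hs.2)) hs.2)
    set G : ℝ → ℝ := fun s => (E s ^ m)⁻¹ - (m:ℝ) * κ * s with hGdef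
    have hGmono : MonotoneOn G (Icc 0 t) := by
      apply monotoneOn_of_hasDerivWithinAt_nonneg (convex_Icc 0 t)
        (f' := fun s => -((m:ℝ) * E s ^ (m-1) * (-(μ/2) * y s ^ 2 - (α*μ/2) * x s ^ (p+1))) / (E s ^ m)^2 - (m:ℝ)*κ)
      · apply ContinuousOn.sub
        · apply ContinuousOn.inv₀
          · exact (contE.mono Icc_subset_Ici_self).pow m
          · intro s hs; exact pow_ne_zero m (hEpos s hs).ne'
        · exact (continuous_const.mul continuous_id).continuousOn
      · intro s hs
        rw [interior_Icc] at hs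
        have hs0 : s ∈ Ici (0:ℝ) := le_of_lt hs.1
        have hsI : s ∈ Icc (0:ℝ) t := ⟨hs.1.le, hs.2.le⟩
        have hne : E s ^ m ≠ 0 := pow_ne_zero m (hEpos s hsI).ne'
        have H1 : HasDerivAt E (-(μ/2) * y s ^ 2 - (α*μ/2) * x s ^ (p+1)) s :=
          (hE' s hs0).hasDerivAt (Ici_mem_nhds hs.1)
        have H2 := (H1.pow m).inv hne
        have H3 : HasDerivAt (fun u => (m:ℝ)*κ*u) ((m:ℝ)*κ) s := by
          simpa using (hasDerivAt_id s).const_mul ((m:ℝ)*κ)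
        exact (H2.sub H3).hasDerivWithinAt
      · intro s hs
        rw [interior_Icc] at hs
        have hsI : s ∈ Icc (0:ℝ) t := ⟨hs.1.le, hs.2.le⟩
        have hP : 0 < E s := hEpos s hsI
        have hds := hdiff s (le_of_lt hs.1)
        have hpos2 : (0:ℝ) < (E s ^ m)^2 := pow_pos (pow_pos hP m) 2
        rw [sub_nonneg, le_div_iff₀ hpos2]
        have h1 : (m:ℝ) * E s^(m-1) * (-(μ/2)*y s^2 - (α*μ/2)*x s^(p+1))
            ≤ (m:ℝ) * E s^(m-1) * (-(κ * E s^(m+1))) :=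
          mul_le_mul_of_nonneg_left hds (mul_nonneg (Nat.cast_nonneg m) (pow_nonneg (hEnn s) _))
        have h2 : (m:ℝ) * E s^(m-1) * (-(κ * E s^(m+1))) = -((m:ℝ)*κ*(E s^m)^2) := by
          have hEpow : (E s^m)^2 = E s^(m-1) * E s^(m+1) := by
            rw [← pow_add, ← pow_mul]; congr 1; omega
          rw [hEpow]; ring
        linarith
    have h01 : G 0 ≤ G t := hGmono (left_mem_Icc.mpr ht.le) (right_mem_Icc.mpr ht.le) ht.le
    have hG0 : 0 ≤ (E 0 ^ m)⁻¹ := inv_nonneg.2 (pow_nonneg (hEnn 0) m)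
    have hGt : G t = (E t ^ m)⁻¹ - (m:ℝ)*κ*t := rfl
    have hG0' : G 0 = (E 0 ^ m)⁻¹ := by rw [hGdef]; simp
    have hkey : (m:ℝ) * κ * t ≤ (E t ^ m)⁻¹ := by
      rw [hGt] at h01; rw [hG0'] at h01; linarith
    have hmkt : 0 < (m:ℝ) * κ * t := mul_pos (mul_pos hmR hκ) ht
    have hEm : E t ^ m ≤ ((m:ℝ) * κ * t)⁻¹ := by
      have h := inv_anti₀ hmkt hkey
      rwa [inv_inv] at h
    have hmne : (m:ℝ) ≠ 0 := hmR.ne'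
    have h1 : E t = (E t ^ m) ^ ((1:ℝ)/(m:ℝ)) := by
      rw [← Real.rpow_natCast (E t) m, ← Real.rpow_mul (hEnn t)]
      rw [mul_one_div, div_self hmne, Real.rpow_one]
    have h2 : (E t ^ m) ^ ((1:ℝ)/(m:ℝ)) ≤ (((m:ℝ)*κ*t)⁻¹) ^ ((1:ℝ)/(m:ℝ)) :=
      Real.rpow_le_rpow (pow_nonneg (hEnn t) m) hEm (by positivity)
    have h3 : (((m:ℝ)*κ*t)⁻¹) ^ ((1:ℝ)/(m:ℝ))
        = (((m:ℝ)*κ)⁻¹) ^ ((1:ℝ)/(m:ℝ)) * t ^ (-(1/(m:ℝ))) := by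
      rw [show ((m:ℝ)*κ*t)⁻¹ = ((m:ℝ)*κ)⁻¹ * t⁻¹ from by rw [mul_inv]]
      rw [Real.mul_rpow (inv_nonneg.2 (mul_pos hmR hκ).le) (inv_nonneg.2 ht.le)]
      congr 1
      rw [Real.inv_rpow ht.le, ← Real.rpow_neg ht.le]
    rw [h1]
    rw [← h3]
    exact h2

/-- Decay of the modified energy for a C¹ solution of
`x' = y, y' = -α x^p - μ y` with `μ > 0`: there is `C† > 0` such that
`ℰ(t) ≤ C† t^(-2/(p-1))` for all `t > 0`. -/
theorem duffing_modified_energy_decay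
    (p : ℕ) (hp : 3 ≤ p) (hodd : Odd p)
    (μ α : ℝ) (hμ : 0 < μ) (hα : 0 < α)
    (x y : ℝ → ℝ)
    (hx : ∀ t ∈ Ici (0:ℝ), HasDerivWithinAt x (y t) (Ici 0) t)
    (hy : ∀ t ∈ Ici (0:ℝ),
      HasDerivWithinAt y (-α * x t ^ p - μ * y t) (Ici 0) t) :
    ∃ C : ℝ, 0 < C ∧ ∀ t : ℝ, 0 < t →
      (1/2) * y t ^ 2 + (μ/2) * x t * y t + (μ^2/4) * x t ^ 2
        + (α / ((p : ℝ) + 1)) * x t ^ (p + 1)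
      ≤ C * t ^ (-(2 / ((p : ℝ) - 1))) := by
  obtain ⟨m, hm⟩ := hodd
  have hm1 : 1 ≤ m := by omega
  exact duffing_aux p m hm hm1 μ α hμ hα x y hx hy
end

section
/- Let p ≥ 3 be an odd natural number, μ > 0, α > 0, and let (x, y) be a C¹ solution on [0, ∞) of the system x' = y, y' = -α x^p - μ y. Define ℰ(t) := (1/2) y(t)² + (μ/2) x(t) y(t) + (μ²/4) x(t)² + (α/(p+1)) x(t)^{p+1}. Then ℰ is nonincreasing on [0, ∞); in particular ℰ(t) ≤ ℰ(0) for all t ≥ 0. -/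
open Set

/-- The modified energy of a C¹ solution of
`x' = y, y' = -α x^p - μ y` with `μ > 0` is nonincreasing on `[0, ∞)`;
in particular `ℰ(t) ≤ ℰ(0)` for all `t ≥ 0`. -/
theorem duffing_modified_energy_nonincreasing
    (p : ℕ) (hp : 3 ≤ p) (hodd : Odd p)
    (μ α : ℝ) (hμ : 0 < μ) (hα : 0 < α)
    (x y : ℝ → ℝ)
    (hx : ∀ t ∈ Ici (0:ℝ), HasDerivWithinAt x (y t) (Ici 0) t)
    (hy : ∀ t ∈ Ici (0:ℝ),
      HasDerivWithinAt y (-α * x t ^ p - μ * y t) (Ici 0) t) :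
    AntitoneOn
      (fun t => (1/2) * y t ^ 2 + (μ/2) * x t * y t + (μ^2/4) * x t ^ 2
        + (α / ((p : ℝ) + 1)) * x t ^ (p + 1)) (Ici 0) ∧
    ∀ t ≥ (0:ℝ),
      (1/2) * y t ^ 2 + (μ/2) * x t * y t + (μ^2/4) * x t ^ 2
        + (α / ((p : ℝ) + 1)) * x t ^ (p + 1)
      ≤ (1/2) * y 0 ^ 2 + (μ/2) * x 0 * y 0 + (μ^2/4) * x 0 ^ 2
        + (α / ((p : ℝ) + 1)) * x 0 ^ (p + 1) := by
  have hp1 : ((p:ℝ) + 1) ≠ 0 := by positivity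
  set E : ℝ → ℝ := fun t => (1/2) * y t ^ 2 + (μ/2) * x t * y t + (μ^2/4) * x t ^ 2
        + (α / ((p : ℝ) + 1)) * x t ^ (p + 1) with hE
  have hE' : ∀ t ∈ Ici (0:ℝ), HasDerivWithinAt E
      (-(μ/2) * y t ^ 2 - (μ*α/2) * x t ^ (p+1)) (Ici 0) t := by
    intro t ht
    have hxt := hx t ht
    have hyt := hy t ht
    have h := ((((hyt.pow 2).const_mul (1/2:ℝ)).add
        ((hxt.mul hyt).const_mul (μ/2))).add
        ((hxt.pow 2).const_mul (μ^2/4))).add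
        ((hxt.pow (p+1)).const_mul (α/((p:ℝ)+1)))
    have hfun : E = fun s => 1/2 * y s ^ 2 + μ/2 * (x s * y s) + μ^2/4 * x s ^ 2
        + α/((p:ℝ)+1) * x s ^ (p+1) := by
      funext s; rw [hE]; ring
    rw [hfun]
    convert h using 1
    · rfl
    · rfl
    · rfl
    have hps : x t ^ (p + 1 - 1) = x t ^ p := by norm_num
    rw [hps]
    push_cast
    field_simp
    ring
  have hcont : ContinuousOn E (Ici 0) := fun t ht => (hE' t ht).continuousWithinAt
  have hint : interior (Ici (0:ℝ)) = Ioi 0 := interior_Ici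
  have hderiv : ∀ t ∈ interior (Ici (0:ℝ)),
      HasDerivAt E (-(μ/2) * y t ^ 2 - (μ*α/2) * x t ^ (p+1)) t := by
    intro t ht
    rw [hint] at ht
    exact (hE' t (mem_Ici.mpr (le_of_lt ht))).hasDerivAt (Ici_mem_nhds ht)
  have hA : AntitoneOn E (Ici 0) := by
    apply antitoneOn_of_deriv_nonpos (convex_Ici 0) hcont
    · intro t ht
      exact (hderiv t ht).differentiableAt.differentiableWithinAt
    · intro t ht
      rw [(hderiv t ht).deriv]
      have h1 : (0:ℝ) ≤ x t ^ (p+1) := (hodd.add_one).pow_nonneg _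
      nlinarith [sq_nonneg (y t), mul_pos hμ hα]
  refine ⟨hA, fun t ht => ?_⟩
  exact hA (self_mem_Ici) ht ht
end

section
/- Let p ≥ 3 be an odd natural number, μ ≥ 0, α > 0, Δt > 0, and let x, y : ℕ → ℝ be sequences satisfying the difference scheme (x^{(n+1)} - x^{(n)})/Δt = (1/2)(y^{(n+1)} + y^{(n)}) and (y^{(n+1)} - y^{(n)})/Δt = -(α/(p+1)) Σ_{l=0}^{p} (x^{(n+1)})^{p-l} (x^{(n)})^{l} - (μ/2)(y^{(n+1)} + y^{(n)}) for all n. Define the discrete energy E^{(n)} := (1/2)(y^{(n)})² + (α/(p+1))(x^{(n)})^{p+1}. Then for each n, (E^{(n+1)} - E^{(n)})/Δt + (μ/4)(y^{(n+1)} + y^{(n)})² = 0. -/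
/-!
The scheme is a discrete gradient method: `(α/(p+1)) ∑ₗ x₁^(p-l) x₀^l` is a discrete gradient of
`V x = (α/(p+1)) x^(p+1)`, i.e. it times `x₁ - x₀` equals `V x₁ - V x₀` (a geometric sum identity).
Multiplying the `y`-equation by the midpoint `(y₁ + y₀)/2 = (x₁ - x₀)/Δt` therefore turns the
kinetic part into `(y₁² - y₀²)/(2Δt)`, the potential part into `(V x₁ - V x₀)/Δt`, and leaves the
damping term `-(μ/4)(y₁ + y₀)²`.
-/

open Finset

theorem geom_sum₂_rev_mul {R : Type*} [CommRing R] (a b : R) (p : ℕ) :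
    (∑ l ∈ range (p + 1), a ^ (p - l) * b ^ l) * (a - b) = a ^ (p + 1) - b ^ (p + 1) := by
  have h := geom_sum₂_mul b a (p + 1)
  simp only [add_tsub_cancel_right, mul_comm (b ^ _)] at h
  linear_combination -h

theorem midpoint_energy_step_of_discrete_gradient {V : ℝ → ℝ} {g μ Δt x₀ x₁ y₀ y₁ : ℝ}
    (hΔt : Δt ≠ 0) (hg : g * (x₁ - x₀) = V x₁ - V x₀)
    (hx : (x₁ - x₀) / Δt = (1/2) * (y₁ + y₀))
    (hy : (y₁ - y₀) / Δt = -g - (μ/2) * (y₁ + y₀)) :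
    (((1/2) * y₁ ^ 2 + V x₁) - ((1/2) * y₀ ^ 2 + V x₀)) / Δt + (μ/4) * (y₁ + y₀) ^ 2 = 0 := by
  rw [div_eq_iff hΔt] at hx hy
  rw [div_add' _ _ _ hΔt, div_eq_zero_iff]
  left
  linear_combination (1/2) * (y₁ + y₀) * hy - hg + g * hx

theorem discrete_energy_dissipation_step_general
    (p : ℕ)
    (μ α Δt : ℝ) (hΔt : 0 < Δt)
    (x y : ℕ → ℝ)
    (hx : ∀ n : ℕ, (x (n + 1) - x n) / Δt = (1/2) * (y (n + 1) + y n))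
    (hy : ∀ n : ℕ, (y (n + 1) - y n) / Δt =
      -(α / ((p : ℝ) + 1)) * (∑ l ∈ Finset.range (p + 1),
        x (n + 1) ^ (p - l) * x n ^ l)
      - (μ/2) * (y (n + 1) + y n)) :
    ∀ n : ℕ,
      (((1/2) * y (n + 1) ^ 2 + (α / ((p : ℝ) + 1)) * x (n + 1) ^ (p + 1))
        - ((1/2) * y n ^ 2 + (α / ((p : ℝ) + 1)) * x n ^ (p + 1))) / Δt
      + (μ/4) * (y (n + 1) + y n) ^ 2 = 0 := by
  intro n
  refine midpoint_energy_step_of_discrete_gradient (V := fun u ↦ α / ((p : ℝ) + 1) * u ^ (p + 1))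
    (g := α / ((p : ℝ) + 1) * ∑ l ∈ range (p + 1), x (n + 1) ^ (p - l) * x n ^ l)
    hΔt.ne' ?_ (hx n) (by rw [hy n, neg_mul])
  rw [mul_assoc, geom_sum₂_rev_mul, mul_sub]

/-- Discrete energy dissipation law for the
structure-preserving difference scheme:
`(E^(n+1) - E^(n))/Δt + (μ/4)(y^(n+1) + y^(n))² = 0`, where
`E^(n) = (1/2)(y^(n))² + (α/(p+1))(x^(n))^(p+1)`. -/
theorem discrete_energy_dissipation_step
    (p : ℕ) (hp : 3 ≤ p) (hodd : Odd p)
    (μ α Δt : ℝ) (hμ : 0 ≤ μ) (hα : 0 < α) (hΔt : 0 < Δt)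
    (x y : ℕ → ℝ)
    (hx : ∀ n : ℕ, (x (n + 1) - x n) / Δt = (1/2) * (y (n + 1) + y n))
    (hy : ∀ n : ℕ, (y (n + 1) - y n) / Δt =
      -(α / ((p : ℝ) + 1)) * (∑ l ∈ Finset.range (p + 1),
        x (n + 1) ^ (p - l) * x n ^ l)
      - (μ/2) * (y (n + 1) + y n)) :
    ∀ n : ℕ,
      (((1/2) * y (n + 1) ^ 2 + (α / ((p : ℝ) + 1)) * x (n + 1) ^ (p + 1))
        - ((1/2) * y n ^ 2 + (α / ((p : ℝ) + 1)) * x n ^ (p + 1))) / Δt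
      + (μ/4) * (y (n + 1) + y n) ^ 2 = 0 :=
  discrete_energy_dissipation_step_general p μ α Δt hΔt x y hx hy
end

section
/- Let p ≥ 3 be an odd natural number, μ ≥ 0, α > 0, Δt > 0, and let x, y : ℕ → ℝ be sequences satisfying the difference scheme (x^{(n+1)} - x^{(n)})/Δt = (1/2)(y^{(n+1)} + y^{(n)}) and (y^{(n+1)} - y^{(n)})/Δt = -(α/(p+1)) Σ_{l=0}^{p} (x^{(n+1)})^{p-l} (x^{(n)})^{l} - (μ/2)(y^{(n+1)} + y^{(n)}) for all n. Define E^{(n)} := (1/2)(y^{(n)})² + (α/(p+1))(x^{(n)})^{p+1}. Then for every n ≥ 1, E^{(n)} + (μ/4) Σ_{l=0}^{n-1} (y^{(l+1)} + y^{(l)})² Δt = E^{(0)}. -/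
/-!
The scheme is built on the discrete gradient of `x ↦ x ^ (p + 1)`: the sum
`∑ l, x₁ ^ (p - l) * x₀ ^ l` times `x₁ - x₀` is exactly `x₁ ^ (p + 1) - x₀ ^ (p + 1)`.
Multiplying the second equation by the midpoint velocity `(y₁ + y₀) / 2` and substituting the
first one, the potential terms cancel and one step changes the energy by exactly
`-(μ/4) (y₁ + y₀)² Δt`; summing over the steps telescopes.
-/

open Finset

theorem sum_pow_mul_pow_mul_sub {R : Type*} [CommRing R] (a b : R) (p : ℕ) :
    (∑ l ∈ range (p + 1), b ^ (p - l) * a ^ l) * (b - a) = b ^ (p + 1) - a ^ (p + 1) := by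
  rw [← geom_sum₂_mul, ← geom_sum₂_comm]
  congr 1
  refine sum_congr rfl fun l _ => ?_
  rw [mul_comm, Nat.add_sub_cancel]

theorem add_sum_range_eq_of_add_eq {G : Type*} [AddCommGroup G] {E d : ℕ → G}
    (h : ∀ n, E (n + 1) + d n = E n) (n : ℕ) : E n + ∑ l ∈ range n, d l = E 0 := by
  have hd : ∀ l, d l = E l - E (l + 1) := fun l => eq_sub_of_add_eq' (h l)
  simp only [hd, sum_range_sub', add_sub_cancel]

noncomputable def schemeEnergy (p : ℕ) (α x y : ℝ) : ℝ :=
  1 / 2 * y ^ 2 + α / ((p : ℝ) + 1) * x ^ (p + 1)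

theorem schemeEnergy_step {p : ℕ} {μ α Δt x₀ x₁ y₀ y₁ : ℝ} (hΔt : Δt ≠ 0)
    (hx : (x₁ - x₀) / Δt = 1 / 2 * (y₁ + y₀))
    (hy : (y₁ - y₀) / Δt = -(α / ((p : ℝ) + 1)) * (∑ l ∈ range (p + 1), x₁ ^ (p - l) * x₀ ^ l)
      - μ / 2 * (y₁ + y₀)) :
    schemeEnergy p α x₁ y₁ + μ / 4 * (y₁ + y₀) ^ 2 * Δt = schemeEnergy p α x₀ y₀ := by
  rw [div_eq_iff hΔt] at hx hy
  have hgrad := sum_pow_mul_pow_mul_sub x₀ x₁ p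
  set S := ∑ l ∈ range (p + 1), x₁ ^ (p - l) * x₀ ^ l
  unfold schemeEnergy
  linear_combination (1 / 2 * (y₁ + y₀)) * hy + α / ((p : ℝ) + 1) * S * hx
    - α / ((p : ℝ) + 1) * hgrad

theorem discrete_energy_identity_general
    (p : ℕ)
    (μ α Δt : ℝ) (hΔt : 0 < Δt)
    (x y : ℕ → ℝ)
    (hx : ∀ n : ℕ, (x (n + 1) - x n) / Δt = (1/2) * (y (n + 1) + y n))
    (hy : ∀ n : ℕ, (y (n + 1) - y n) / Δt =
      -(α / ((p : ℝ) + 1)) * (∑ l ∈ Finset.range (p + 1),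
        x (n + 1) ^ (p - l) * x n ^ l)
      - (μ/2) * (y (n + 1) + y n)) :
    ∀ n : ℕ, 1 ≤ n →
      ((1/2) * y n ^ 2 + (α / ((p : ℝ) + 1)) * x n ^ (p + 1))
        + (μ/4) * (∑ l ∈ Finset.range n, (y (l + 1) + y l) ^ 2) * Δt
      = (1/2) * y 0 ^ 2 + (α / ((p : ℝ) + 1)) * x 0 ^ (p + 1) := by
  intro n _
  have htotal := add_sum_range_eq_of_add_eq
    (E := fun m => schemeEnergy p α (x m) (y m)) (d := fun m => μ / 4 * (y (m + 1) + y m) ^ 2 * Δt)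
    (fun m => schemeEnergy_step hΔt.ne' (hx m) (hy m)) n
  rw [← sum_mul, ← mul_sum] at htotal
  exact htotal

/-- Discrete energy identity for the structure-preserving
difference scheme: for every `n ≥ 1`,
`E^(n) + (μ/4) Σ_{l=0}^{n-1} (y^(l+1) + y^(l))² Δt = E^(0)`, where
`E^(n) = (1/2)(y^(n))² + (α/(p+1))(x^(n))^(p+1)`. -/
theorem discrete_energy_identity
    (p : ℕ) (hp : 3 ≤ p) (hodd : Odd p)
    (μ α Δt : ℝ) (hμ : 0 ≤ μ) (hα : 0 < α) (hΔt : 0 < Δt)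
    (x y : ℕ → ℝ)
    (hx : ∀ n : ℕ, (x (n + 1) - x n) / Δt = (1/2) * (y (n + 1) + y n))
    (hy : ∀ n : ℕ, (y (n + 1) - y n) / Δt =
      -(α / ((p : ℝ) + 1)) * (∑ l ∈ Finset.range (p + 1),
        x (n + 1) ^ (p - l) * x n ^ l)
      - (μ/2) * (y (n + 1) + y n)) :
    ∀ n : ℕ, 1 ≤ n →
      ((1/2) * y n ^ 2 + (α / ((p : ℝ) + 1)) * x n ^ (p + 1))
        + (μ/4) * (∑ l ∈ Finset.range n, (y (l + 1) + y l) ^ 2) * Δt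
      = (1/2) * y 0 ^ 2 + (α / ((p : ℝ) + 1)) * x 0 ^ (p + 1) :=
  discrete_energy_identity_general p μ α Δt hΔt x y hx hy
end
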